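/- arXiv:1010.0565 — 10 statements merged into one kernel-verified Lean document; each statement's English description precedes it below -/
import Mathlib

section
/- Let z be a complex number of modulus 1 such that |z^n - 1| ≤ √3 - ε for all integers n, where ε > 0. Then z = 1. -/
open Real

lemma norm_exp_sub_one (x : ℝ) :
    ‖Complex.exp (x * Complex.I) - 1‖ = 2 * |Real.sin (x / 2)| := by
  have h1 : Complex.exp (x * Complex.I) - 1
      = Complex.exp ((x / 2 : ℝ) * Complex.I) *
        (Complex.exp ((x / 2 : ℝ) * Complex.I) - Complex.exp ((-(x / 2) : ℝ) * Complex.I)) := by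
    rw [mul_sub, ← Complex.exp_add, ← Complex.exp_add]
    push_cast
    ring_nf
    rw [Complex.exp_zero]
    ring
  rw [h1, norm_mul, Complex.norm_exp_ofReal_mul_I, one_mul]
  rw [Complex.exp_mul_I, Complex.exp_mul_I]
  have h2 : Complex.cos (x/2 : ℝ) + Complex.sin (x/2 : ℝ) * Complex.I
      - (Complex.cos (-(x/2) : ℝ) + Complex.sin (-(x/2) : ℝ) * Complex.I)
      = ((2 * Real.sin (x/2) : ℝ) : ℂ) * Complex.I := by
    push_cast [Complex.ofReal_sin]
    rw [Complex.cos_neg, Complex.sin_neg]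
    ring
  rw [h2, norm_mul, Complex.norm_I, mul_one, Complex.norm_real, Real.norm_eq_abs, abs_mul]
  norm_num

lemma aux_sin {y : ℝ} (h1 : π/3 ≤ y) (h2 : y ≤ 2*π/3) : Real.sqrt 3 / 2 ≤ Real.sin y := by
  rcases le_total y (π/2) with hy | hy
  · rw [← Real.sin_pi_div_three]
    exact Real.sin_le_sin_of_le_of_le_pi_div_two (by linarith [Real.pi_pos]) hy h1
  · rw [← Real.sin_pi_sub, ← Real.sin_pi_div_three]
    exact Real.sin_le_sin_of_le_of_le_pi_div_two (by linarith [Real.pi_pos]) (by linarith)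
      (by linarith)

/-- A complex number of modulus one with `|zⁿ - 1| ≤ √3 - ε` for all integers `n`
equals `1`. -/
theorem stmt1 (z : ℂ) (hz : ‖z‖ = 1) (ε : ℝ) (hε : 0 < ε)
    (h : ∀ n : ℤ, ‖z ^ n - 1‖ ≤ Real.sqrt 3 - ε) : z = 1 := by
  set θ := z.arg with hθdef
  have hzexp : z = Complex.exp (θ * Complex.I) := by
    have h1 := Complex.norm_mul_exp_arg_mul_I z
    rw [hz] at h1
    simpa using h1.symm
  have key : ∀ n : ℕ, 2 * |Real.sin (n * θ / 2)| ≤ Real.sqrt 3 - ε := by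
    intro n
    have hn := h (n : ℤ)
    rw [zpow_natCast, hzexp, ← Complex.exp_nat_mul] at hn
    have : (n : ℂ) * (θ * Complex.I) = ((n * θ : ℝ) : ℂ) * Complex.I := by push_cast; ring
    rw [this, norm_exp_sub_one] at hn
    exact hn
  set ψ := |θ| with hψdef
  have hψpi : ψ ≤ π := Complex.abs_arg_le_pi z
  have keyψ : ∀ n : ℕ, 2 * |Real.sin (n * ψ / 2)| ≤ Real.sqrt 3 - ε := by
    intro n
    rcases abs_cases θ with ⟨he, _⟩ | ⟨he, _⟩
    · rw [hψdef, he]; exact key n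
    · rw [hψdef, he]
      have : (n : ℝ) * -θ / 2 = -(n * θ / 2) := by ring
      rw [this, Real.sin_neg, abs_neg]
      exact key n
  have sqrt3_pos : (0:ℝ) < Real.sqrt 3 := by positivity
  -- main claim
  have claim : ∀ k : ℕ, 2 ^ k * ψ ≤ 2 * π / 3 := by
    intro k
    induction k with
    | zero =>
      by_contra hc
      push_neg at hc
      simp only [pow_zero, one_mul] at hc
      have h1 : Real.sqrt 3 / 2 ≤ Real.sin (ψ / 2) := by
        rcases le_total (ψ/2) (π/2) with hy | hy
        · rw [← Real.sin_pi_div_three]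
          exact Real.sin_le_sin_of_le_of_le_pi_div_two (by linarith [Real.pi_pos]) hy
            (by linarith)
        · have he : ψ/2 = π/2 := le_antisymm (by linarith) hy
          rw [he, Real.sin_pi_div_two]
          nlinarith [Real.sq_sqrt (show (0:ℝ) ≤ 3 by norm_num), Real.sqrt_nonneg 3]
      have h2 := keyψ 1
      have h3 : |Real.sin ((1:ℕ) * ψ / 2)| = Real.sin (ψ/2) := by
        push_cast
        rw [one_mul, abs_of_nonneg]
        apply Real.sin_nonneg_of_nonneg_of_le_pi <;> [positivity; linarith]
      rw [h3] at h2
      linarith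
    | succ k ih =>
      by_contra hc
      push_neg at hc
      have hy1 : π/3 < 2^k * ψ := by
        rw [pow_succ] at hc
        nlinarith
      have h1 : Real.sqrt 3 / 2 ≤ Real.sin (2^k * ψ) := aux_sin (le_of_lt hy1) ih
      have h2 := keyψ (2 ^ (k+1))
      have h3 : ((2 ^ (k+1) : ℕ) : ℝ) * ψ / 2 = 2^k * ψ := by
        push_cast
        rw [pow_succ]
        ring
      rw [h3] at h2
      have h4 : |Real.sin (2^k * ψ)| = Real.sin (2^k * ψ) := by
        rw [abs_of_nonneg]
        apply Real.sin_nonneg_of_nonneg_of_le_pi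
        · positivity
        · linarith [Real.pi_pos]
      rw [h4] at h2
      linarith
  have hψ0 : ψ = 0 := by
    by_contra hc
    have hψpos : 0 < ψ := lt_of_le_of_ne (abs_nonneg θ) (Ne.symm hc)
    obtain ⟨k, hk⟩ := pow_unbounded_of_one_lt ((2*π/3)/ψ) (one_lt_two (α := ℝ))
    have : 2*π/3 < 2^k * ψ := by
      rw [div_lt_iff₀ hψpos] at hk
      linarith
    linarith [claim k]
  have hθ0 : θ = 0 := abs_eq_zero.mp hψ0
  rw [hzexp, hθ0]
  simp
end

section
/- Let ν : Γ → U(ℋ) be a unitary representation such that ‖ν(g) - Id‖ ≤ √3 - ε for all g ∈ Γ, where ε > 0. Then ν(g) = Id for all g ∈ Γ, i.e., ν is the trivial representation. -/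
open Real Complex

lemma arc_lemma {θ : ℝ} (h0 : 0 < θ) (hπ : θ ≤ Real.pi) :
    ∃ n : ℕ, 2 * Real.pi / 3 ≤ n * θ ∧ (n : ℝ) * θ ≤ 4 * Real.pi / 3 := by
  have hpi := Real.pi_pos
  rcases le_or_gt (2 * Real.pi / 3) θ with hc | hc
  · exact ⟨1, by simpa using hc, by push_cast; linarith⟩
  · refine ⟨⌈(2 * Real.pi / 3) / θ⌉₊, ?_, ?_⟩
    · have := Nat.le_ceil ((2 * Real.pi / 3) / θ)
      calc 2 * Real.pi / 3 = (2 * Real.pi / 3) / θ * θ := by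
            field_simp
        _ ≤ (⌈(2 * Real.pi / 3) / θ⌉₊ : ℝ) * θ := by
            exact mul_le_mul_of_nonneg_right this h0.le
    · have h1 : (⌈(2 * Real.pi / 3) / θ⌉₊ : ℝ) < (2 * Real.pi / 3) / θ + 1 :=
        Nat.ceil_lt_add_one (by positivity)
      have h2 : (⌈(2 * Real.pi / 3) / θ⌉₊ : ℝ) * θ < ((2 * Real.pi / 3) / θ + 1) * θ :=
        mul_lt_mul_of_pos_right h1 h0
      have h3 : ((2 * Real.pi / 3) / θ + 1) * θ = 2 * Real.pi / 3 + θ := by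
        field_simp
      nlinarith

lemma cos_bound {t : ℝ} (h1 : 2 * Real.pi / 3 ≤ t) (h2 : t ≤ 4 * Real.pi / 3) :
    Real.cos t ≤ -(1 / 2) := by
  have hpi := Real.pi_pos
  have habs : |t - Real.pi| ≤ Real.pi / 3 := by
    rw [abs_le]; constructor <;> linarith
  have hmono : Real.cos (Real.pi / 3) ≤ Real.cos |t - Real.pi| :=
    Real.cos_le_cos_of_nonneg_of_le_pi (abs_nonneg _) (by linarith) habs
  rw [Real.cos_pi_div_three] at hmono
  rw [Real.cos_abs] at hmono
  have : Real.cos (t - Real.pi) = -Real.cos t := Real.cos_sub_pi t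
  linarith

lemma key_lemma {l : ℂ} (hl : ‖l‖ = 1) (hne : l ≠ 1) :
    ∃ n : ℕ, (l ^ n).re ≤ -(1 / 2) := by
  have hpi := Real.pi_pos
  have hl0 : l ≠ 0 := by intro h; simp [h] at hl
  -- reduce to the case of nonnegative argument via conjugation
  have main : ∀ z : ℂ, ‖z‖ = 1 → 0 < z.arg → z.arg ≤ Real.pi →
      ∃ n : ℕ, (z ^ n).re ≤ -(1 / 2) := by
    intro z hz h0 hπ
    obtain ⟨n, hn1, hn2⟩ := arc_lemma h0 hπ
    refine ⟨n, ?_⟩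
    obtain ⟨θ, hθ1, hθ2, hz'⟩ : ∃ θ : ℝ, 2 * Real.pi / 3 ≤ n * θ ∧ (n:ℝ) * θ ≤ 4 * Real.pi / 3 ∧
        z = Complex.exp (θ * Complex.I) := by
      refine ⟨z.arg, hn1, hn2, ?_⟩
      conv_lhs => rw [← Complex.norm_mul_exp_arg_mul_I z]
      rw [hz, Complex.ofReal_one, one_mul]
    have hze : z ^ n = Complex.exp ((n * θ : ℝ) * Complex.I) := by
      rw [hz', ← Complex.exp_nat_mul]
      congr 1
      push_cast
      ring
    rw [hze, Complex.exp_ofReal_mul_I_re]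
    exact cos_bound hθ1 hθ2
  rcases lt_trichotomy l.arg 0 with harg | harg | harg
  · -- use the conjugate
    have hc : ‖starRingEnd ℂ l‖ = 1 := by simpa using hl
    have harg' : 0 < (starRingEnd ℂ l).arg := by
      have hne' : l.arg ≠ Real.pi := by intro hh; rw [hh] at harg; linarith
      rw [Complex.arg_conj, if_neg hne']
      linarith
    have harg'' : (starRingEnd ℂ l).arg ≤ Real.pi := Complex.arg_le_pi _
    obtain ⟨n, hn⟩ := main _ hc harg' harg''
    refine ⟨n, ?_⟩
    rw [← map_pow] at hn
    rwa [Complex.conj_re] at hn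
  · exfalso
    apply hne
    have := Complex.norm_mul_exp_arg_mul_I l
    rw [harg, hl] at this
    simpa using this.symm
  · exact main l hl harg (Complex.arg_le_pi l)

/-- A unitary representation uniformly within `√3 - ε` of the identity is trivial. -/
theorem stmt2 {Γ : Type*} [Group Γ] {H : Type*} [NormedAddCommGroup H]
    [InnerProductSpace ℂ H] [CompleteSpace H]
    (ν : Γ →* unitary (H →L[ℂ] H)) (ε : ℝ) (hε : 0 < ε)
    (h : ∀ g, ‖(ν g : H →L[ℂ] H) - 1‖ ≤ Real.sqrt 3 - ε) :
    ∀ g, ν g = 1 := by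
  intro g
  rcases subsingleton_or_nontrivial H with hH | hH
  · exact Subtype.ext (Subsingleton.elim _ _)
  set T : H →L[ℂ] H := (ν g : H →L[ℂ] H) with hT
  have hmem : T ∈ unitary (H →L[ℂ] H) := (ν g).2
  have hstar1 : star T * T = 1 := hmem.1
  have hstar2 : T * star T = 1 := hmem.2
  -- powers
  have hpow : ∀ n : ℕ, ‖T ^ n - 1‖ ≤ Real.sqrt 3 - ε := by
    intro n
    have : T ^ n = (ν (g ^ n) : H →L[ℂ] H) := by
      rw [map_pow]
      rfl
    rw [this]
    exact h (g ^ n)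
  -- spectrum of T is {1}
  have hspec : spectrum ℂ T ⊆ {1} := by
    intro l hl
    have hl1 : ‖l‖ = 1 := by
      have := spectrum.subset_circle_of_unitary hmem hl
      simpa using this
    by_contra hne
    simp only [Set.mem_singleton_iff] at hne
    obtain ⟨n, hn⟩ := key_lemma hl1 hne
    have hpowmem : l ^ n ∈ spectrum ℂ (T ^ n) :=
      spectrum.pow_image_subset T n (Set.mem_image_of_mem _ hl)
    have hsub : l ^ n - 1 ∈ spectrum ℂ (T ^ n - 1) := by
      have := spectrum.sub_singleton_eq (T ^ n) (1 : ℂ)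
      rw [map_one] at this
      rw [← this]
      exact ⟨l ^ n, hpowmem, 1, rfl, rfl⟩
    have hnorm : ‖l ^ n - 1‖ ≤ ‖T ^ n - 1‖ := spectrum.norm_le_norm_of_mem hsub
    have habs : ‖l ^ n‖ = 1 := by rw [norm_pow, hl1, one_pow]
    -- ‖l^n - 1‖ ≥ √3
    have hsq : ‖l ^ n - 1‖ ^ 2 = 2 - 2 * (l ^ n).re := by
      rw [Complex.sq_norm, Complex.normSq_apply]
      have h2 : (l ^ n).re ^ 2 + (l ^ n).im ^ 2 = 1 := by
        have := Complex.sq_norm (l ^ n)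
        rw [habs, Complex.normSq_apply] at this
        nlinarith
      simp [Complex.sub_re, Complex.sub_im, Complex.one_re, Complex.one_im]
      nlinarith
    have h3 : (3 : ℝ) ≤ ‖l ^ n - 1‖ ^ 2 := by rw [hsq]; linarith
    have hsqrt : Real.sqrt 3 ≤ ‖l ^ n - 1‖ := by
      have := Real.sqrt_le_sqrt h3
      rwa [Real.sqrt_sq (by positivity)] at this
    have : Real.sqrt 3 ≤ Real.sqrt 3 - ε := by
      calc Real.sqrt 3 ≤ ‖l ^ n - 1‖ := hsqrt
        _ = ‖l ^ n - 1‖ := rfl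
        _ ≤ ‖T ^ n - 1‖ := hnorm
        _ ≤ Real.sqrt 3 - ε := hpow n
    linarith
  -- T - 1 is star-normal
  have hnormal : IsStarNormal (T - 1) := by
    constructor
    rw [Commute, SemiconjBy]
    simp only [star_sub, star_one, sub_mul, mul_sub, one_mul, mul_one, hstar1, hstar2]
    abel
  -- spectrum of T - 1 is {0}
  have hspec0 : spectrum ℂ (T - 1) ⊆ {0} := by
    have heq := spectrum.sub_singleton_eq T (1 : ℂ)
    rw [map_one] at heq
    rw [← heq]
    rintro x ⟨a, ha, b, hb, rfl⟩
    have := hspec ha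
    simp only [Set.mem_singleton_iff] at this hb ⊢
    rw [this, hb.symm]
    simp
  have hrad : spectralRadius ℂ (T - 1) = 0 := by
    rw [spectralRadius]
    refine le_antisymm ?_ zero_le
    refine iSup₂_le fun k hk => ?_
    have := hspec0 hk
    simp only [Set.mem_singleton_iff] at this
    simp [this]
  have := IsStarNormal.spectralRadius_eq_nnnorm (T - 1)
  rw [hrad] at this
  have hT0 : T - 1 = 0 := by
    have h0 : ‖T - 1‖₊ = 0 := by exact_mod_cast this.symm
    simpa using h0
  have hT1 : T = 1 := by rwa [sub_eq_zero] at hT0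
  exact Subtype.ext hT1
end

section
/- Let Λ ≤ Γ be groups, ℛ a set of coset representatives for the left Λ-cosets with retraction r : Γ → ℛ, μ : Λ → U(ℋ) a map, and μ̄ : Γ → U(ℓ²(ℛ, ℋ)) the induced map defined by (μ̄(γ)f)(x) = μ(xγ r(xγ)⁻¹) f(r(xγ)). Then def(μ̄) = def(μ). -/
set_option maxHeartbeats 1000000

open scoped ENNReal

lemma aux_unitary_norm_le_one {A : Type*} [NormedRing A] [StarRing A] [CStarRing A]
    (h1 : ‖(1 : A)‖ ≤ 1) {u : A} (hu : u ∈ unitary A) : ‖u‖ ≤ 1 := by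
  have h : ‖star u * u‖ = ‖u‖ * ‖u‖ := CStarRing.norm_star_mul_self
  rw [hu.1] at h
  nlinarith [norm_nonneg u]

lemma aux_defect_term_le_two {A : Type*} [NormedRing A] [StarRing A] [CStarRing A]
    (h1 : ‖(1 : A)‖ ≤ 1) {u v w : A} (hu : u ∈ unitary A) (hv : v ∈ unitary A)
    (hw : w ∈ unitary A) : ‖u - v * w‖ ≤ 2 := by
  have h2 := norm_mul_le v w
  have h3 := norm_sub_le u (v * w)
  have hu' := aux_unitary_norm_le_one h1 hu
  have hv' := aux_unitary_norm_le_one h1 hv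
  have hw' := aux_unitary_norm_le_one h1 hw
  nlinarith [norm_nonneg v, norm_nonneg w]

/-- The induced map `μ̄ : Γ → U(ℓ²(ℛ, H))` of a map `μ : Λ → U(H)` has the same
defect as `μ`. Here `r : Γ → ℛ ⊆ Γ` is the retraction onto a set of
representatives of the left `Λ`-cosets, and
`(μ̄ γ f) x = μ (x γ r(xγ)⁻¹) (f (r (x γ)))`. -/
theorem stmt5 {Γ : Type*} [Group Γ] (Λ : Subgroup Γ) {H : Type*}
    [NormedAddCommGroup H] [InnerProductSpace ℂ H] [CompleteSpace H]
    (r : Γ → Γ) (hr : ∀ γ, γ * (r γ)⁻¹ ∈ Λ)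
    (hrc : ∀ l γ : Γ, l ∈ Λ → r (l * γ) = r γ)
    (μ : Λ → (H →L[ℂ] H)) (hμ : ∀ l, μ l ∈ unitary (H →L[ℂ] H))
    (Mbar : Γ → (lp (fun _ : Set.range r => H) 2 →L[ℂ] lp (fun _ : Set.range r => H) 2))
    (hMu : ∀ γ, Mbar γ ∈ unitary (lp (fun _ : Set.range r => H) 2 →L[ℂ] lp (fun _ : Set.range r => H) 2))
    (hform : ∀ (γ : Γ) (f : lp (fun _ : Set.range r => H) 2) (x : Set.range r),
      (Mbar γ f) x
        = μ ⟨(x : Γ) * γ * (r ((x : Γ) * γ))⁻¹, hr ((x : Γ) * γ)⟩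
            (f ⟨r ((x : Γ) * γ), ⟨(x : Γ) * γ, rfl⟩⟩)) :
    (⨆ p : Γ × Γ, ‖Mbar (p.1 * p.2) - Mbar p.1 * Mbar p.2‖)
      = ⨆ p : Λ × Λ, ‖μ (p.1 * p.2) - μ p.1 * μ p.2‖ := by
  have hone : ‖(1 : H →L[ℂ] H)‖ ≤ 1 := by
    rw [ContinuousLinearMap.one_def]; exact ContinuousLinearMap.norm_id_le
  have honeK : ‖(1 : lp (fun _ : Set.range r => H) 2 →L[ℂ] lp (fun _ : Set.range r => H) 2)‖ ≤ 1 := by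
    rw [ContinuousLinearMap.one_def]; exact ContinuousLinearMap.norm_id_le
  have hrr : ∀ γ, r (r γ) = r γ := by
    intro γ
    have h := hrc ((γ * (r γ)⁻¹)⁻¹) γ (inv_mem (hr γ))
    rw [show (γ * (r γ)⁻¹)⁻¹ * γ = r γ by group] at h
    exact h
  have hfix : ∀ x : Set.range r, r (x : Γ) = (x : Γ) := by
    rintro ⟨_, γ, rfl⟩
    exact hrr γ
  have hmul : ∀ (γ₁ γ₂ x : Γ), r (r (x * γ₁) * γ₂) = r (x * γ₁ * γ₂) := by
    intro γ₁ γ₂ x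
    have h := hrc (x * γ₁ * (r (x * γ₁))⁻¹) (r (x * γ₁) * γ₂) (hr (x * γ₁))
    rw [show x * γ₁ * (r (x * γ₁))⁻¹ * (r (x * γ₁) * γ₂) = x * γ₁ * γ₂ by group] at h
    exact h.symm
  have hkey : ∀ (γ₁ γ₂ : Γ) (f : lp (fun _ : Set.range r => H) 2) (x : Set.range r),
      ((Mbar (γ₁ * γ₂) - Mbar γ₁ * Mbar γ₂) f) x
        = (μ (⟨(x : Γ) * γ₁ * (r ((x : Γ) * γ₁))⁻¹, hr _⟩ *
              ⟨r ((x : Γ) * γ₁) * γ₂ * (r (r ((x : Γ) * γ₁) * γ₂))⁻¹, hr _⟩)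
            - μ ⟨(x : Γ) * γ₁ * (r ((x : Γ) * γ₁))⁻¹, hr _⟩ *
              μ ⟨r ((x : Γ) * γ₁) * γ₂ * (r (r ((x : Γ) * γ₁) * γ₂))⁻¹, hr _⟩)
            (f ⟨r ((x : Γ) * γ₁ * γ₂), ⟨(x : Γ) * γ₁ * γ₂, rfl⟩⟩) := by
    intro γ₁ γ₂ f x
    have h1 := hform (γ₁ * γ₂) f x
    have h3 := hform γ₁ (Mbar γ₂ f) x
    have h2 := hform γ₂ f ⟨r ((x : Γ) * γ₁), ⟨(x : Γ) * γ₁, rfl⟩⟩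
    simp only [ContinuousLinearMap.sub_apply, ContinuousLinearMap.mul_apply, lp.coeFn_sub,
      Pi.sub_apply, ContinuousLinearMap.sub_apply, h1, h3, h2]
    simp only [← mul_assoc]
    simp only [hmul γ₁ γ₂ (x : Γ)]
    have he : (⟨(x : Γ) * γ₁ * γ₂ * (r ((x : Γ) * γ₁ * γ₂))⁻¹, hr _⟩ : Λ)
        = ⟨(x : Γ) * γ₁ * (r ((x : Γ) * γ₁))⁻¹, hr _⟩ *
          ⟨r ((x : Γ) * γ₁) * γ₂ * (r ((x : Γ) * γ₁ * γ₂))⁻¹,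
            by rw [← hmul γ₁ γ₂ (x : Γ)]; exact hr _⟩ := by
      apply Subtype.ext
      simp only [MulMemClass.mk_mul_mk]
      group
    rw [he]
  have hbddD : BddAbove (Set.range fun p : Λ × Λ => ‖μ (p.1 * p.2) - μ p.1 * μ p.2‖) := by
    refine ⟨2, ?_⟩
    rintro _ ⟨p, rfl⟩
    exact aux_defect_term_le_two hone (hμ _) (hμ _) (hμ _)
  have hbddE : BddAbove (Set.range fun p : Γ × Γ => ‖Mbar (p.1 * p.2) - Mbar p.1 * Mbar p.2‖) := by
    refine ⟨2, ?_⟩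
    rintro _ ⟨p, rfl⟩
    exact aux_defect_term_le_two honeK (hMu _) (hMu _) (hMu _)
  have hD0 : (0:ℝ) ≤ ⨆ p : Λ × Λ, ‖μ (p.1 * p.2) - μ p.1 * μ p.2‖ :=
    Real.iSup_nonneg fun _ => norm_nonneg _
  have hpt : (2 : ℝ≥0∞).toReal = (2 : ℝ) := by norm_num
  -- Direction ≤ : each Γ-defect term is bounded by the Λ-defect sup.
  have hED : ∀ γ₁ γ₂ : Γ, ‖Mbar (γ₁ * γ₂) - Mbar γ₁ * Mbar γ₂‖
      ≤ ⨆ p : Λ × Λ, ‖μ (p.1 * p.2) - μ p.1 * μ p.2‖ := by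
    intro γ₁ γ₂
    set D := ⨆ p : Λ × Λ, ‖μ (p.1 * p.2) - μ p.1 * μ p.2‖ with hD
    refine ContinuousLinearMap.opNorm_le_bound _ hD0 ?_
    intro f
    set σ : Set.range r → Set.range r :=
      fun x => ⟨r ((x : Γ) * γ₁ * γ₂), ⟨(x : Γ) * γ₁ * γ₂, rfl⟩⟩ with hσ
    have hσinj : Function.Injective σ := by
      intro x y hxy
      have h : r ((x : Γ) * γ₁ * γ₂) = r ((y : Γ) * γ₁ * γ₂) := congrArg Subtype.val hxy
      have hl : ((y : Γ) * γ₁ * γ₂ * (r ((y : Γ) * γ₁ * γ₂))⁻¹) *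
          ((x : Γ) * γ₁ * γ₂ * (r ((x : Γ) * γ₁ * γ₂))⁻¹)⁻¹ ∈ Λ :=
        mul_mem (hr _) (inv_mem (hr _))
      have hy : (y : Γ) = (((y : Γ) * γ₁ * γ₂ * (r ((y : Γ) * γ₁ * γ₂))⁻¹) *
          ((x : Γ) * γ₁ * γ₂ * (r ((x : Γ) * γ₁ * γ₂))⁻¹)⁻¹) * (x : Γ) := by
        rw [← h]; group
      have hryx : r (y : Γ) = r (x : Γ) := by
        conv_lhs => rw [hy]
        exact hrc _ _ hl
      apply Subtype.ext
      rw [← hfix x, ← hfix y, hryx]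
    refine lp.norm_le_of_tsum_le (p := 2) (by norm_num) (mul_nonneg hD0 (norm_nonneg f)) ?_
    rw [hpt]
    have hsum_f : Summable (fun y : Set.range r => ‖f y‖ ^ (2:ℝ)) := by
      have := (lp.memℓp f).summable (p := 2) (by norm_num)
      simpa [hpt] using this
    have hsumD : Summable (fun y : Set.range r => (D * ‖f y‖) ^ (2:ℝ)) := by
      have heq : (fun y : Set.range r => (D * ‖f y‖) ^ (2:ℝ))
          = fun y => D ^ (2:ℝ) * ‖f y‖ ^ (2:ℝ) := by
        funext y; rw [Real.mul_rpow hD0 (norm_nonneg _)]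
      rw [heq]; exact hsum_f.mul_left _
    have hsumσ : Summable (fun x : Set.range r => (D * ‖f (σ x)‖) ^ (2:ℝ)) :=
      hsumD.comp_injective hσinj
    have hsumL : Summable
        (fun x : Set.range r => ‖((Mbar (γ₁ * γ₂) - Mbar γ₁ * Mbar γ₂) f) x‖ ^ (2:ℝ)) := by
      have := (lp.memℓp ((Mbar (γ₁ * γ₂) - Mbar γ₁ * Mbar γ₂) f)).summable (p := 2) (by norm_num)
      simpa [hpt] using this
    have hterm : ∀ x : Set.range r,
        ‖((Mbar (γ₁ * γ₂) - Mbar γ₁ * Mbar γ₂) f) x‖ ^ (2:ℝ) ≤ (D * ‖f (σ x)‖) ^ (2:ℝ) := by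
      intro x
      apply Real.rpow_le_rpow (norm_nonneg _) ?_ (by norm_num)
      rw [hkey γ₁ γ₂ f x]
      refine (ContinuousLinearMap.le_opNorm _ _).trans ?_
      refine mul_le_mul_of_nonneg_right ?_ (norm_nonneg _)
      exact le_ciSup hbddD
        (⟨(x : Γ) * γ₁ * (r ((x : Γ) * γ₁))⁻¹, hr _⟩,
         ⟨r ((x : Γ) * γ₁) * γ₂ * (r (r ((x : Γ) * γ₁) * γ₂))⁻¹, hr _⟩)
    have hnf := lp.norm_rpow_eq_tsum (p := 2) (by norm_num) f
    rw [hpt] at hnf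
    calc ∑' x : Set.range r, ‖((Mbar (γ₁ * γ₂) - Mbar γ₁ * Mbar γ₂) f) x‖ ^ (2:ℝ)
        ≤ ∑' x : Set.range r, (D * ‖f (σ x)‖) ^ (2:ℝ) := hsumL.tsum_le_tsum hterm hsumσ
      _ ≤ ∑' y : Set.range r, (D * ‖f y‖) ^ (2:ℝ) :=
          hsumσ.tsum_le_tsum_of_inj σ hσinj (fun c _ => by positivity) (fun x => le_rfl) hsumD
      _ = D ^ (2:ℝ) * ∑' y : Set.range r, ‖f y‖ ^ (2:ℝ) := by
          simp_rw [Real.mul_rpow hD0 (norm_nonneg _)]; exact tsum_mul_left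
      _ = (D * ‖f‖) ^ (2:ℝ) := by
          rw [Real.mul_rpow hD0 (norm_nonneg _), ← hnf]
  -- Direction ≥
  have hDE : ∀ q : Λ × Λ, ‖μ (q.1 * q.2) - μ q.1 * μ q.2‖
      ≤ ⨆ p : Γ × Γ, ‖Mbar (p.1 * p.2) - Mbar p.1 * Mbar p.2‖ := by
    classical
    rintro ⟨l₁, l₂⟩
    show ‖μ (l₁ * l₂) - μ l₁ * μ l₂‖ ≤ _
    set x₀ : Set.range r := ⟨r 1, ⟨1, rfl⟩⟩ with hx₀
    set γ₁ : Γ := (r 1)⁻¹ * ↑l₁ * r 1 with hγ₁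
    set γ₂ : Γ := (r 1)⁻¹ * ↑l₂ * r 1 with hγ₂
    have hc : (x₀ : Γ) = r 1 := rfl
    have hr1 : r ((x₀ : Γ) * γ₁) = r 1 := by
      rw [hc, hγ₁, show r 1 * ((r 1)⁻¹ * ↑l₁ * r 1) = ↑l₁ * r 1 by group, hrc _ _ l₁.2, hrr]
    have hr2 : r (r ((x₀ : Γ) * γ₁) * γ₂) = r 1 := by
      rw [hr1, hγ₂, show r 1 * ((r 1)⁻¹ * ↑l₂ * r 1) = ↑l₂ * r 1 by group, hrc _ _ l₂.2, hrr]
    have hr3 : r ((x₀ : Γ) * γ₁ * γ₂) = r 1 := by rw [← hmul, hr2]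
    refine le_trans ?_ (le_ciSup hbddE (γ₁, γ₂))
    refine ContinuousLinearMap.opNorm_le_bound _ (norm_nonneg _) ?_
    intro v
    set g : lp (fun _ : Set.range r => H) 2 := lp.single 2 x₀ v with hg
    have hgv : (g : ∀ _ : Set.range r, H) x₀ = v := by
      rw [hg]; exact lp.single_apply_self (E := fun _ : Set.range r => H) 2 x₀ v
    have hgn : ‖g‖ = ‖v‖ := by
      rw [hg]; exact lp.norm_single (E := fun _ : Set.range r => H) (p := 2) (by norm_num) x₀ v
    have key := hkey γ₁ γ₂ g x₀
    have hA : (⟨(x₀ : Γ) * γ₁ * (r ((x₀ : Γ) * γ₁))⁻¹, hr _⟩ : Λ) = l₁ := by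
      apply Subtype.ext
      show (x₀ : Γ) * γ₁ * (r ((x₀ : Γ) * γ₁))⁻¹ = ↑l₁
      rw [hr1, hc, hγ₁]; group
    have hB : (⟨r ((x₀ : Γ) * γ₁) * γ₂ * (r (r ((x₀ : Γ) * γ₁) * γ₂))⁻¹, hr _⟩ : Λ) = l₂ := by
      apply Subtype.ext
      show r ((x₀ : Γ) * γ₁) * γ₂ * (r (r ((x₀ : Γ) * γ₁) * γ₂))⁻¹ = ↑l₂
      rw [hr2, hr1, hγ₂]; group
    have hidx : (⟨r ((x₀ : Γ) * γ₁ * γ₂), ⟨(x₀ : Γ) * γ₁ * γ₂, rfl⟩⟩ : Set.range r) = x₀ := by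
      apply Subtype.ext
      show r ((x₀ : Γ) * γ₁ * γ₂) = (x₀ : Γ)
      rw [hr3, hc]
    rw [hA, hB, hidx, hgv] at key
    calc ‖(μ (l₁ * l₂) - μ l₁ * μ l₂) v‖
        = ‖((Mbar (γ₁ * γ₂) - Mbar γ₁ * Mbar γ₂) g) x₀‖ := by rw [key]
      _ ≤ ‖(Mbar (γ₁ * γ₂) - Mbar γ₁ * Mbar γ₂) g‖ :=
          lp.norm_apply_le_norm (by norm_num) _ _
      _ ≤ ‖Mbar (γ₁ * γ₂) - Mbar γ₁ * Mbar γ₂‖ * ‖g‖ :=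
          ContinuousLinearMap.le_opNorm _ _
      _ = ‖Mbar (γ₁ * γ₂) - Mbar γ₁ * Mbar γ₂‖ * ‖v‖ := by rw [hgn]
  exact le_antisymm (ciSup_le fun p => hED p.1 p.2) (ciSup_le hDE)
end

section
/- Let T be a bounded operator on a Hilbert space with ‖T - Id‖ ≤ ε for some ε < 1, and let T = U(T*T)^{1/2} be the polar decomposition (T is invertible, U unitary). Then ‖U - Id‖ ≤ 2ε. -/
open scoped InnerProductSpace

set_option maxHeartbeats 1000000 in
/-- If `‖T - 1‖ ≤ ε < 1` and `T = U S` is the polar decomposition of `T`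
(`U` unitary, `S = (T*T)^{1/2}` positive), then `‖U - 1‖ ≤ 2ε`. -/
theorem stmt8 {H : Type*} [NormedAddCommGroup H] [InnerProductSpace ℂ H]
    [CompleteSpace H]
    (T U S : H →L[ℂ] H) (ε : ℝ) (hε : ε < 1) (hT : ‖T - 1‖ ≤ ε)
    (hU : U ∈ unitary (H →L[ℂ] H)) (hS : S.IsPositive)
    (hSsq : S * S = star T * T) (hpolar : T = U * S) :
    ‖U - 1‖ ≤ 2 * ε := by
  have hε0 : 0 ≤ ε := (norm_nonneg _).trans hT
  rcases subsingleton_or_nontrivial H with hH | hH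
  · have h0 : (U - 1 : H →L[ℂ] H) = 0 := Subsingleton.elim _ _
    rw [h0, norm_zero]; positivity
  have hSsa : IsSelfAdjoint S := hS.isSelfAdjoint
  have hSpos : (0 : H →L[ℂ] H) ≤ S :=
    (ContinuousLinearMap.nonneg_iff_isPositive S).mpr hS
  -- ‖T‖ ≤ 1 + ε
  have hTnorm : ‖T‖ ≤ 1 + ε := by
    calc ‖T‖ = ‖(T - 1) + 1‖ := by rw [sub_add_cancel]
    _ ≤ ‖T - 1‖ + ‖(1 : H →L[ℂ] H)‖ := norm_add_le _ _
    _ ≤ 1 + ε := by rw [norm_one]; linarith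
  -- ‖S‖ ≤ 1 + ε
  have hSnormsq : ‖S‖ * ‖S‖ = ‖T‖ * ‖T‖ := by
    rw [← CStarRing.norm_star_mul_self (x := S), ← CStarRing.norm_star_mul_self (x := T),
      hSsa.star_eq, hSsq]
  have hSnorm : ‖S‖ ≤ 1 + ε := by
    nlinarith [norm_nonneg S, norm_nonneg T]
  -- pointwise lower bound for T
  have hTx : ∀ x : H, (1 - ε) * ‖x‖ ≤ ‖T x‖ := by
    intro x
    have h1 : ‖(T - 1) x‖ ≤ ε * ‖x‖ :=
      le_trans ((T - 1).le_opNorm x) (mul_le_mul_of_nonneg_right hT (norm_nonneg x))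
    have h2 : (T - 1) x = T x - x := by simp
    rw [h2] at h1
    have h3 : ‖x‖ ≤ ‖T x - x‖ + ‖T x‖ := by
      calc ‖x‖ = ‖(x - T x) + T x‖ := by rw [sub_add_cancel]
      _ ≤ ‖x - T x‖ + ‖T x‖ := norm_add_le _ _
      _ = ‖T x - x‖ + ‖T x‖ := by rw [norm_sub_rev]
    linarith
  -- (1-ε)^2 ≤ T*T in the Loewner order
  have hTT_lower : algebraMap ℝ (H →L[ℂ] H) ((1 - ε) ^ 2) ≤ star T * T := by
    rw [ContinuousLinearMap.le_def]
    constructor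
    · exact ((IsSelfAdjoint.star_mul_self T).sub
        (IsSelfAdjoint.algebraMap _ (IsSelfAdjoint.all (_ : ℝ)))).isSymmetric
    · intro x
      rw [ContinuousLinearMap.reApplyInnerSelf]
      simp only [ContinuousLinearMap.sub_apply, ContinuousLinearMap.mul_apply,
        Algebra.algebraMap_eq_smul_one, ContinuousLinearMap.smul_apply,
        ContinuousLinearMap.one_apply, inner_sub_left, map_sub]
      have e1 : RCLike.re ⟪(star T) (T x), x⟫_ℂ = ‖T x‖ ^ 2 := by
        rw [ContinuousLinearMap.star_eq_adjoint, ContinuousLinearMap.adjoint_inner_left,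
          inner_self_eq_norm_sq]
      have e2 : RCLike.re ⟪((1 - ε) ^ 2 : ℝ) • x, x⟫_ℂ = (1 - ε) ^ 2 * ‖x‖ ^ 2 := by
        rw [RCLike.real_smul_eq_coe_smul (K := ℂ), inner_smul_left,
          inner_self_eq_norm_sq_to_K, RCLike.conj_ofReal, ← RCLike.ofReal_pow,
          ← RCLike.ofReal_mul, RCLike.ofReal_re]
      rw [e1, e2]
      have h4 := hTx x
      have h5 : (0:ℝ) ≤ 1 - ε := by linarith
      nlinarith [norm_nonneg x, norm_nonneg (T x),
        mul_le_mul h4 h4 (by positivity) (norm_nonneg (T x))]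
  -- spectrum of S is contained in [1-ε, 1+ε]
  have hspecS : ∀ l ∈ spectrum ℝ S, 1 - ε ≤ l ∧ l ≤ 1 + ε := by
    intro l hl
    have hupper : l ≤ 1 + ε := by
      have hle : S ≤ algebraMap ℝ (H →L[ℂ] H) (1 + ε) :=
        (CStarAlgebra.norm_le_iff_le_algebraMap S (by linarith) hSpos).mp hSnorm
      exact (le_algebraMap_iff_spectrum_le (a := S) hSsa).mp hle l hl
    have hl0 : 0 ≤ l := by
      have h0 : algebraMap ℝ (H →L[ℂ] H) 0 ≤ S := by simpa using hSpos
      exact ((algebraMap_le_iff_le_spectrum (a := S) hSsa).mp h0) l hl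
    have hsq : l ^ 2 ∈ spectrum ℝ (S ^ 2) := by
      rw [← cfc_pow_id (R := ℝ) S 2 hSsa, cfc_map_spectrum (fun x : ℝ => x ^ 2) S hSsa]
      exact ⟨l, hl, rfl⟩
    rw [sq, hSsq] at hsq
    have hlow_sq : (1 - ε) ^ 2 ≤ l ^ 2 :=
      ((algebraMap_le_iff_le_spectrum (a := star T * T)
        (IsSelfAdjoint.star_mul_self T)).mp hTT_lower) _ hsq
    constructor
    · nlinarith
    · exact hupper
  -- ‖S - 1‖ ≤ ε
  have hS1 : ‖S - (1 : H →L[ℂ] H)‖ ≤ ε := by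
    have hsa1 : IsSelfAdjoint (S - (1 : H →L[ℂ] H)) := hSsa.sub ((IsSelfAdjoint.one _))
    have hcfc : S - (1 : H →L[ℂ] H) = cfc (fun x : ℝ => x - 1) S := by
      rw [cfc_sub (fun x : ℝ => x) (fun _ => 1) S, cfc_id' ℝ S, cfc_const_one ℝ S]
    rw [← hsa1.toReal_spectralRadius_eq_norm]
    have hrad : spectralRadius ℝ (S - (1 : H →L[ℂ] H)) ≤ ENNReal.ofReal ε := by
      rw [spectralRadius]
      refine iSup₂_le fun k hk => ?_
      rw [hcfc, cfc_map_spectrum (fun x : ℝ => x - 1) S hSsa] at hk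
      obtain ⟨l, hl, rfl⟩ := hk
      obtain ⟨h1l, h2l⟩ := hspecS l hl
      have habs : ‖l - 1‖ ≤ ε := by
        rw [Real.norm_eq_abs, abs_le]; constructor <;> linarith
      rw [← enorm_eq_nnnorm, ← ofReal_norm]
      exact ENNReal.ofReal_le_ofReal habs
    calc (spectralRadius ℝ (S - (1 : H →L[ℂ] H))).toReal
        ≤ (ENNReal.ofReal ε).toReal := ENNReal.toReal_mono ENNReal.ofReal_ne_top hrad
      _ = ε := ENNReal.toReal_ofReal hε0
  -- conclude
  have hUT : ‖U - T‖ ≤ ε := by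
    have hEq : U - T = U * ((1 : H →L[ℂ] H) - S) := by
      rw [hpolar, mul_sub, mul_one]
    rw [hEq, CStarRing.norm_mem_unitary_mul _ hU, norm_sub_rev]
    exact hS1
  calc ‖U - 1‖ = ‖(U - T) + (T - 1)‖ := by rw [sub_add_sub_cancel]
    _ ≤ ‖U - T‖ + ‖T - 1‖ := norm_add_le _ _
    _ ≤ ε + ε := add_le_add hUT hT
    _ = 2 * ε := by ring
end

section
/- Let Γ be a group and φ : Γ → ℝ a homogeneous quasimorphism which is not a homomorphism, and set μ = exp(2πiφ) : Γ → S¹ ⊂ ℂ. Then (3/π)·arcsin(D(μ)/2) + ‖dφ‖_∞ ≥ 1, where D(μ) is the infimum over homomorphisms ν : Γ → S¹ of sup_γ |μ(γ) - ν(γ)| and dφ(γ,η) = φ(γη) - φ(γ) - φ(η). -/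
private lemma stmt9._L1 (t : ℝ) :
    ‖Complex.exp (2 * Real.pi * Complex.I * t) - 1‖ = 2 * |Real.sin (Real.pi * t)| := by
  have h : (2 * Real.pi * Complex.I * t) = ((2 * Real.pi * t : ℝ) : ℂ) * Complex.I := by
    push_cast; ring
  rw [h, Complex.exp_mul_I]
  have h2 : Complex.cos (2 * Real.pi * t : ℝ) + Complex.sin (2 * Real.pi * t : ℝ) * Complex.I - 1
      = Complex.ofReal (Real.cos (2 * Real.pi * t) - 1)
        + Complex.ofReal (Real.sin (2 * Real.pi * t)) * Complex.I := by
    push_cast [Complex.ofReal_cos, Complex.ofReal_sin]; ring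
  rw [h2, Complex.norm_add_mul_I]
  have hcos : Real.sin (Real.pi * t) ^ 2 = 1/2 - Real.cos (2 * (Real.pi * t)) / 2 :=
    Real.sin_sq_eq_half_sub _
  have h5 : 2 * Real.pi * t = 2 * (Real.pi * t) := by ring
  have h4 := Real.sin_sq_add_cos_sq (2 * Real.pi * t)
  have key : (Real.cos (2 * Real.pi * t) - 1)^2 + Real.sin (2 * Real.pi * t)^2
      = (2 * |Real.sin (Real.pi * t)|)^2 := by
    have habs : |Real.sin (Real.pi * t)|^2 = Real.sin (Real.pi * t)^2 := sq_abs _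
    rw [h5] at h4 ⊢
    nlinarith [hcos, habs]
  rw [key, Real.sqrt_sq (by positivity)]

private lemma stmt9._L0 (t : ℝ) : ‖Complex.exp (2 * Real.pi * Complex.I * t)‖ = 1 := by
  have h : (2 * Real.pi * Complex.I * t) = ((2 * Real.pi * t : ℝ) : ℂ) * Complex.I := by
    push_cast; ring
  rw [h, Complex.norm_exp_ofReal_mul_I]

private lemma stmt9._L2abs {v : ℝ} (hv : |v| ≤ 1/2) :
    |Real.sin (Real.pi * v)| = Real.sin (Real.pi * |v|) := by
  rcases le_or_gt 0 v with h | h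
  · rw [abs_of_nonneg h, abs_of_nonneg]
    exact Real.sin_nonneg_of_nonneg_of_le_pi (by positivity)
      (by nlinarith [Real.pi_pos, abs_of_nonneg h ▸ hv])
  · rw [abs_of_neg h, mul_neg, Real.sin_neg]
    rw [abs_of_nonpos (by simpa [mul_neg, Real.sin_neg] using (Real.sin_nonneg_of_nonneg_of_le_pi
      (x := Real.pi * (-v)) (by nlinarith [Real.pi_pos])
      (by nlinarith [Real.pi_pos, abs_of_neg h ▸ hv])))]

private lemma stmt9._L2 {t s₀ : ℝ} (hs : 0 < s₀) (hs2 : s₀ ≤ 1/2)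
    (h : |Real.sin (Real.pi * t)| < Real.sin (Real.pi * s₀)) : |t - round t| < s₀ := by
  by_contra hc
  push_neg at hc
  set u := t - round t with hu
  have hub : |u| ≤ 1/2 := abs_sub_round t
  have h1 : Real.sin (Real.pi * t) = (-1 : ℝ)^(round t) * Real.sin (Real.pi * u) := by
    have : Real.pi * t = Real.pi * u + (round t : ℝ) * Real.pi := by rw [hu]; ring
    rw [this, Real.sin_add_int_mul_pi]
  have h2 : |Real.sin (Real.pi * t)| = |Real.sin (Real.pi * u)| := by
    rw [h1, abs_mul]
    have hone : |(-1 : ℝ)^(round t)| = 1 := by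
      rcases Int.even_or_odd (round t) with he | ho
      · rw [Even.neg_one_zpow he]; simp
      · rw [Odd.neg_one_zpow ho]; simp
    rw [hone, one_mul]
  rw [h2, stmt9._L2abs hub] at h
  have h3 : Real.sin (Real.pi * s₀) ≤ Real.sin (Real.pi * |u|) := by
    apply Real.strictMonoOn_sin.monotoneOn
    · constructor <;> nlinarith [Real.pi_pos]
    · constructor <;> nlinarith [Real.pi_pos, abs_nonneg u]
    · nlinarith [Real.pi_pos]
  linarith

private lemma stmt9._L3 {t s₀ : ℝ} (hs3 : 3 * s₀ ≤ 1) (ht : |t| < s₀)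
    (h : ∀ n : ℤ, ∃ k : ℤ, |(n : ℝ) * t - k| < s₀) : t = 0 := by
  by_contra htne
  have key : ∀ u : ℝ, 0 < u → u < s₀ → (∀ n : ℤ, ∃ k : ℤ, |(n:ℝ) * u - k| < s₀) → False := by
    intro u hu hus hmul
    set n : ℤ := ⌈s₀ / u⌉ with hn
    have hge : s₀ / u ≤ (n : ℝ) := Int.le_ceil _
    have hlt : (n : ℝ) < s₀ / u + 1 := by
      have := Int.ceil_lt_add_one (s₀ / u)
      push_cast at this ⊢
      linarith
    have hnu1 : s₀ ≤ (n:ℝ) * u := by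
      rw [div_le_iff₀ hu] at hge; linarith [hge]
    have hnu2 : (n:ℝ) * u < s₀ + u := by
      have h2 : (n:ℝ) * u < (s₀/u + 1) * u := by nlinarith
      rw [add_mul, div_mul_cancel₀ _ (ne_of_gt hu), one_mul] at h2
      exact h2
    obtain ⟨k, hk⟩ := hmul n
    rcases le_or_gt (k:ℝ) 0 with hk1 | hk1
    · have : (n:ℝ)*u - k ≥ s₀ := by linarith
      rw [abs_lt] at hk; linarith
    · have hk1' : (1:ℤ) ≤ k := by
        have : (0:ℤ) < k := by exact_mod_cast hk1
        omega
      have hk2 : (1:ℝ) ≤ k := by exact_mod_cast hk1'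
      have : (n:ℝ)*u - k ≤ -s₀ := by nlinarith
      rw [abs_lt] at hk; linarith
  rcases lt_or_gt_of_ne htne with hneg | hpos
  · apply key (-t) (by linarith) (by rw [abs_of_neg hneg] at ht; linarith)
    intro n
    obtain ⟨k, hk⟩ := h (-n)
    exact ⟨k, by push_cast at hk ⊢; rw [show (n:ℝ) * -t = -n * t by ring]; exact hk⟩
  · exact key t hpos (by rw [abs_of_pos hpos] at ht; linarith) h

/-- If `φ` is a homogeneous quasimorphism which is not a homomorphism and
`μ = exp(2πiφ)`, then `(3/π) arcsin(D(μ)/2) + ‖dφ‖_∞ ≥ 1`. -/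
theorem stmt9 {Γ : Type*} [Group Γ] (φ : Γ → ℝ)
    (hqm : BddAbove (Set.range fun p : Γ × Γ => |φ (p.1 * p.2) - φ p.1 - φ p.2|))
    (hhomog : ∀ (γ : Γ) (n : ℤ), φ (γ ^ n) = n * φ γ)
    (hnothom : ¬ ∀ x y, φ (x * y) = φ x + φ y) :
    1 ≤ (3 / Real.pi) *
        Real.arcsin ((⨅ ν : Γ →* Circle, ⨆ γ : Γ,
          ‖Complex.exp (2 * Real.pi * Complex.I * (φ γ)) - (ν γ : ℂ)‖) / 2)
      + ⨆ p : Γ × Γ, |φ (p.1 * p.2) - φ p.1 - φ p.2| := by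
  by_contra hgoal
  push_neg at hgoal
  set δ := ⨆ p : Γ × Γ, |φ (p.1 * p.2) - φ p.1 - φ p.2| with hδdef
  set D := ⨅ ν : Γ →* Circle, ⨆ γ : Γ,
      ‖Complex.exp (2 * Real.pi * Complex.I * (φ γ)) - (ν γ : ℂ)‖ with hDdef
  have hπ := Real.pi_pos
  have hδ0 : 0 ≤ δ := Real.iSup_nonneg (fun p => abs_nonneg _)
  have hD0 : 0 ≤ D :=
    Real.iInf_nonneg (fun ν => Real.iSup_nonneg fun γ => norm_nonneg _)
  have harc0 : 0 ≤ Real.arcsin (D/2) := Real.arcsin_nonneg.mpr (by linarith)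
  have hδ1 : δ < 1 := by
    have : 0 ≤ 3/Real.pi * Real.arcsin (D/2) := by positivity
    linarith
  set s₀ := (1 - δ)/3 with hs₀def
  have hs0 : 0 < s₀ := by rw [hs₀def]; linarith
  have hs3 : 3 * s₀ ≤ 1 := by rw [hs₀def]; linarith
  have hs2 : s₀ ≤ 1/2 := by rw [hs₀def]; linarith
  -- arcsin (D/2) < π * s₀
  have harc : Real.arcsin (D/2) < Real.pi * s₀ := by
    have h1 : 3/Real.pi * Real.arcsin (D/2) < 3*s₀ := by rw [hs₀def]; linarith
    have h2 := mul_lt_mul_of_pos_left h1 (show (0:ℝ) < Real.pi/3 by positivity)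
    calc Real.arcsin (D/2) = Real.pi/3 * (3/Real.pi * Real.arcsin (D/2)) := by
          field_simp
      _ < Real.pi/3 * (3*s₀) := h2
      _ = Real.pi * s₀ := by ring
  -- D ≤ 2
  have hbound : ∀ (ν : Γ →* Circle) (γ : Γ),
      ‖Complex.exp (2 * Real.pi * Complex.I * (φ γ)) - (ν γ : ℂ)‖ ≤ 2 := by
    intro ν γ
    calc ‖Complex.exp (2 * Real.pi * Complex.I * (φ γ)) - (ν γ : ℂ)‖
        ≤ ‖Complex.exp (2 * Real.pi * Complex.I * (φ γ))‖ + ‖(ν γ : ℂ)‖ := norm_sub_le _ _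
      _ = 1 + 1 := by
          rw [stmt9._L0 (φ γ)]
          rw [Circle.norm_coe]
      _ = 2 := by norm_num
  have hD2 : D ≤ 2 := by
    rw [hDdef]
    apply ciInf_le_of_le ⟨0, by rintro x ⟨ν, rfl⟩; exact Real.iSup_nonneg fun γ => norm_nonneg _⟩ 1
    exact Real.iSup_le (fun γ => hbound 1 γ) (by norm_num)
  have hDlt : D < 2 * Real.sin (Real.pi * s₀) := by
    have hmem1 : Real.arcsin (D/2) ∈ Set.Icc (-(Real.pi/2)) (Real.pi/2) :=
      ⟨Real.neg_pi_div_two_le_arcsin _, Real.arcsin_le_pi_div_two _⟩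
    have hmem2 : Real.pi * s₀ ∈ Set.Icc (-(Real.pi/2)) (Real.pi/2) := by
      constructor <;> nlinarith
    have := Real.strictMonoOn_sin hmem1 hmem2 harc
    rw [Real.sin_arcsin (by linarith) (by linarith)] at this
    linarith
  obtain ⟨ν, hν⟩ := exists_lt_of_ciInf_lt (hDdef ▸ hDlt)
  have hbdd : BddAbove (Set.range fun γ : Γ =>
      ‖Complex.exp (2 * Real.pi * Complex.I * (φ γ)) - (ν γ : ℂ)‖) :=
    ⟨2, by rintro x ⟨γ, rfl⟩; exact hbound ν γ⟩
  have hpt : ∀ γ : Γ, ‖Complex.exp (2 * Real.pi * Complex.I * (φ γ)) - (ν γ : ℂ)‖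
      < 2 * Real.sin (Real.pi * s₀) := fun γ => lt_of_le_of_lt (le_ciSup hbdd γ) hν
  -- the "argument" of ν
  set a : Γ → ℝ := fun γ => (ν γ : ℂ).arg / (2 * Real.pi) with hadef
  have hνeq : ∀ γ : Γ, (ν γ : ℂ) = Complex.exp (2 * Real.pi * Complex.I * (a γ)) := by
    intro γ
    have h1 : ‖(ν γ : ℂ)‖ = 1 := Circle.norm_coe _
    have h2 := Complex.norm_mul_exp_arg_mul_I (ν γ : ℂ)
    rw [h1, Complex.ofReal_one, one_mul] at h2
    rw [← h2]
    congr 1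
    have hπc : (Real.pi : ℂ) ≠ 0 := Complex.ofReal_ne_zero.mpr Real.pi_ne_zero
    rw [hadef]
    push_cast
    field_simp
  -- each φ γ − a γ is close to an integer
  set t : Γ → ℝ := fun γ => φ γ - a γ with htdef
  have hclose : ∀ γ : Γ, |t γ - round (t γ)| < s₀ := by
    intro γ
    apply stmt9._L2 hs0 hs2
    have heq : ‖Complex.exp (2 * Real.pi * Complex.I * (φ γ)) - (ν γ : ℂ)‖
        = 2 * |Real.sin (Real.pi * (t γ))| := by
      rw [hνeq γ]
      have hfac : Complex.exp (2 * Real.pi * Complex.I * (φ γ))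
          - Complex.exp (2 * Real.pi * Complex.I * (a γ))
          = Complex.exp (2 * Real.pi * Complex.I * (a γ))
            * (Complex.exp (2 * Real.pi * Complex.I * (t γ)) - 1) := by
        rw [mul_sub, mul_one, ← Complex.exp_add]
        congr 2
        rw [htdef]
        push_cast
        ring
      rw [hfac, norm_mul, stmt9._L0 (a γ), one_mul, stmt9._L1 (t γ)]
    have := hpt γ
    rw [heq] at this
    linarith
  -- a is a homomorphism modulo ℤ
  have h2πI : (2 * Real.pi * Complex.I : ℂ) ≠ 0 := by
    simp [Real.pi_ne_zero, Complex.I_ne_zero]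
  have haddhom : ∀ x y : Γ, ∃ m : ℤ, a (x*y) = a x + a y + m := by
    intro x y
    have hexp : Complex.exp (2 * Real.pi * Complex.I * (a (x*y)))
        = Complex.exp (2 * Real.pi * Complex.I * ((a x + a y : ℝ) : ℂ)) := by
      rw [← hνeq (x*y), map_mul, Circle.coe_mul, hνeq x, hνeq y, ← Complex.exp_add]
      congr 1
      push_cast
      ring
    rw [Complex.exp_eq_exp_iff_exists_int] at hexp
    obtain ⟨m, hm⟩ := hexp
    refine ⟨m, ?_⟩
    have hc : ((a (x*y) : ℝ) : ℂ) = ((a x + a y + m : ℝ) : ℂ) := by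
      apply mul_left_cancel₀ h2πI
      push_cast at hm ⊢
      linear_combination hm
    exact_mod_cast hc
  have hzpow : ∀ (γ : Γ) (n : ℤ), ∃ m : ℤ, a (γ^n) = n * a γ + m := by
    intro γ n
    have hexp : Complex.exp (2 * Real.pi * Complex.I * (a (γ^n)))
        = Complex.exp (2 * Real.pi * Complex.I * ((n * a γ : ℝ) : ℂ)) := by
      have hcoe : ((ν γ ^ n : Circle) : ℂ) = ((ν γ : ℂ))^n := map_zpow Circle.coeHom (ν γ) n
      rw [← hνeq (γ^n), map_zpow ν γ n, hcoe, hνeq γ, ← Complex.exp_int_mul]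
      congr 1
      push_cast
      ring
    rw [Complex.exp_eq_exp_iff_exists_int] at hexp
    obtain ⟨m, hm⟩ := hexp
    refine ⟨m, ?_⟩
    have hc : ((a (γ^n) : ℝ) : ℂ) = ((n * a γ + m : ℝ) : ℂ) := by
      apply mul_left_cancel₀ h2πI
      push_cast at hm ⊢
      linear_combination hm
    exact_mod_cast hc
  -- each t γ is an integer
  have htint : ∀ γ : Γ, t γ = round (t γ) := by
    intro γ
    have hzero : t γ - round (t γ) = 0 := by
      apply stmt9._L3 hs3 (hclose γ)
      intro n
      obtain ⟨m, hm⟩ := hzpow γ n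
      refine ⟨round (t (γ^n)) + m - n * round (t γ), ?_⟩
      have hteq : t (γ^n) = n * t γ - m := by
        rw [htdef]
        simp only
        rw [hhomog γ n, hm]
        ring
      have : (n:ℝ) * (t γ - round (t γ)) - ((round (t (γ^n)) : ℤ) + m - n * round (t γ) : ℤ)
          = t (γ^n) - round (t (γ^n)) := by
        push_cast
        rw [hteq]
        ring
      rw [this]
      exact hclose (γ^n)
    linarith [hzero]
  -- conclude φ is a homomorphism
  apply hnothom
  intro x y
  obtain ⟨m, hm⟩ := haddhom x y
  have hint : φ (x*y) - φ x - φ y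
      = ((round (t (x*y)) - round (t x) - round (t y) + m : ℤ) : ℝ) := by
    have e1 : φ (x*y) = a (x*y) + round (t (x*y)) := by
      have := htint (x*y); rw [htdef] at this; simp only at this; linarith
    have e2 : φ x = a x + round (t x) := by
      have := htint x; rw [htdef] at this; simp only at this; linarith
    have e3 : φ y = a y + round (t y) := by
      have := htint y; rw [htdef] at this; simp only at this; linarith
    push_cast
    rw [e1, e2, e3, hm]
    push_cast
    ring
  have habs : |φ (x*y) - φ x - φ y| ≤ δ := le_ciSup hqm (x, y)
  rw [hint] at habs
  have hz : |(round (t (x*y)) - round (t x) - round (t y) + m : ℤ)| < 1 := by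
    have : |((round (t (x*y)) - round (t x) - round (t y) + m : ℤ) : ℝ)| < 1 := by
      calc |((round (t (x*y)) - round (t x) - round (t y) + m : ℤ) : ℝ)| ≤ δ := habs
        _ < 1 := hδ1
    exact_mod_cast this
  have hz0 : (round (t (x*y)) - round (t x) - round (t y) + m : ℤ) = 0 :=
    Int.abs_lt_one_iff.mp hz
  have : φ (x*y) - φ x - φ y = 0 := by rw [hint, hz0]; norm_num
  linarith
end

section
/- If Γ admits a homogeneous quasimorphism φ that is not a homomorphism, then for the family μ_t = exp(2πi t φ) : Γ → S¹ (t > 0), def(μ_t) → 0 as t → 0⁺ while liminf_{t→0⁺} D(μ_t) ≥ √3. Consequently def^{(1)}(Γ) ≥ √3, so Γ is not Ulam stable. -/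
open Filter Complex


private lemma normsq_exp_sub_one (a : ℝ) :
    ‖Complex.exp (↑a * Complex.I) - 1‖ ^ 2 = 2 - 2 * Real.cos a := by
  rw [Complex.exp_mul_I, ← Complex.ofReal_cos, ← Complex.ofReal_sin,
    Complex.sq_norm]
  simp [Complex.normSq_apply, Complex.cos_ofReal_re, Complex.sin_ofReal_re]
  nlinarith [Real.sin_sq_add_cos_sq a]

private lemma chord_le (a b : ℝ) :
    ‖Complex.exp (↑a * Complex.I) - Complex.exp (↑b * Complex.I)‖ ≤ |a - b| := by
  have h1 : Complex.exp (↑a * Complex.I) - Complex.exp (↑b * Complex.I)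
      = Complex.exp (↑b * Complex.I) * (Complex.exp (↑(a - b) * Complex.I) - 1) := by
    rw [mul_sub, ← Complex.exp_add, mul_one]
    congr 2
    push_cast; ring
  rw [h1, norm_mul, Complex.norm_exp_ofReal_mul_I, one_mul]
  have h2 := normsq_exp_sub_one (a - b)
  have h3 : 2 - 2 * Real.cos (a - b) ≤ (a - b) ^ 2 := by
    nlinarith [Real.one_sub_sq_div_two_le_cos (x := a - b)]
  nlinarith [norm_nonneg (Complex.exp (↑(a - b) * Complex.I) - 1), abs_nonneg (a - b),
    _root_.sq_abs (a - b)]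

private lemma cos_le_neg_half {x : ℝ} (h1 : 2 * Real.pi / 3 ≤ x) (h2 : x ≤ 4 * Real.pi / 3) :
    Real.cos x ≤ -(1 / 2) := by
  have hc : Real.cos (2 * Real.pi / 3) = -(1 / 2) := by
    rw [show 2 * Real.pi / 3 = Real.pi - Real.pi / 3 by ring, Real.cos_pi_sub,
      Real.cos_pi_div_three]
  have hpi := Real.pi_pos
  rcases le_or_gt x Real.pi with hx | hx
  · rw [← hc]; exact Real.cos_le_cos_of_nonneg_of_le_pi (by positivity) hx h1
  · rw [← Real.cos_two_pi_sub, ← hc]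
    exact Real.cos_le_cos_of_nonneg_of_le_pi (by positivity) (by linarith) (by linarith)

private lemma rigidcore (β : ℝ) (h : ∀ n : ℕ, -(1 / 2) < Real.cos (n * β)) :
    Complex.exp (↑β * Complex.I) = 1 := by
  set b := Complex.arg (Complex.exp (↑β * Complex.I)) with hbdef
  have habs : ‖Complex.exp (↑β * Complex.I)‖ = 1 := Complex.norm_exp_ofReal_mul_I β
  have hexp : Complex.exp (↑b * Complex.I) = Complex.exp (↑β * Complex.I) := by
    conv_rhs => rw [← Complex.norm_mul_exp_arg_mul_I (Complex.exp (↑β * Complex.I))]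
    rw [habs, Complex.ofReal_one, one_mul]
  have hcos : ∀ n : ℕ, Real.cos (n * b) = Real.cos (n * β) := by
    intro n
    have he : Complex.exp (↑((n : ℝ) * b) * Complex.I) = Complex.exp (↑((n : ℝ) * β) * Complex.I) := by
      rw [show ((((n : ℝ) * b : ℝ)) : ℂ) * Complex.I = (n : ℂ) * (↑b * Complex.I) by push_cast; ring,
        show ((((n : ℝ) * β : ℝ)) : ℂ) * Complex.I = (n : ℂ) * (↑β * Complex.I) by push_cast; ring,
        Complex.exp_nat_mul, Complex.exp_nat_mul, hexp]
    have := congrArg Complex.re he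
    rwa [Complex.exp_ofReal_mul_I_re, Complex.exp_ofReal_mul_I_re] at this
  have hb0 : b = 0 := by
    by_contra hne
    set c := |b| with hcdef
    have hc0 : 0 < c := abs_pos.mpr hne
    have hcπ : c ≤ Real.pi :=
      abs_le.mpr ⟨(Complex.neg_pi_lt_arg _).le, Complex.arg_le_pi _⟩
    have hcosc : ∀ n : ℕ, -(1 / 2) < Real.cos (n * c) := by
      intro n
      rcases abs_cases b with ⟨h1, _⟩ | ⟨h1, _⟩ <;> rw [hcdef, h1]
      · rw [hcos]; exact h n
      · rw [mul_neg, Real.cos_neg, hcos]; exact h n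
    obtain ⟨n, hn1, hn2⟩ : ∃ n : ℕ, 2 * Real.pi / 3 ≤ n * c ∧ (n : ℝ) * c ≤ 4 * Real.pi / 3 := by
      have hpi := Real.pi_pos
      rcases le_or_gt (2 * Real.pi / 3) c with hcase | hcase
      · exact ⟨1, by simpa using hcase, by push_cast; linarith⟩
      · refine ⟨⌈2 * Real.pi / 3 / c⌉₊, ?_, ?_⟩
        · have h1 := Nat.le_ceil (2 * Real.pi / 3 / c)
          calc 2 * Real.pi / 3 = 2 * Real.pi / 3 / c * c := by field_simp
            _ ≤ _ := mul_le_mul_of_nonneg_right h1 hc0.le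
          
        · have h1 : (⌈2 * Real.pi / 3 / c⌉₊ : ℝ) < 2 * Real.pi / 3 / c + 1 :=
            Nat.ceil_lt_add_one (by positivity)
          have h2 : (⌈2 * Real.pi / 3 / c⌉₊ : ℝ) * c < (2 * Real.pi / 3 / c + 1) * c :=
            mul_lt_mul_of_pos_right h1 hc0
          have h3 : 2 * Real.pi / 3 / c * c = 2 * Real.pi / 3 := by field_simp
          nlinarith
    exact absurd (cos_le_neg_half hn1 hn2) (not_le.mpr (hcosc n))
  rw [← hexp, hb0]; simp

private lemma cos_gt_of_norm_lt {a : ℝ}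
    (h : ‖Complex.exp (↑a * Complex.I) - 1‖ < Real.sqrt 3) : -(1 / 2) < Real.cos a := by
  have h2 := normsq_exp_sub_one a
  have h3 : ‖Complex.exp (↑a * Complex.I) - 1‖ ^ 2 < 3 := by
    have hs : Real.sqrt 3 ^ 2 = 3 := Real.sq_sqrt (by norm_num)
    nlinarith [norm_nonneg (Complex.exp (↑a * Complex.I) - 1), Real.sqrt_nonneg 3]
  linarith [h2 ▸ h3]

private lemma rigid (θ : ℝ) (w : ℂ) (hw : ‖w‖ = 1)
    (h : ∀ n : ℕ, ‖Complex.exp (↑((n : ℝ) * θ) * Complex.I) - w ^ n‖ < Real.sqrt 3) :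
    Complex.exp (↑θ * Complex.I) = w := by
  set α := Complex.arg w with hα
  have hwα : Complex.exp (↑α * Complex.I) = w := by
    conv_rhs => rw [← Complex.norm_mul_exp_arg_mul_I w]
    rw [hw, Complex.ofReal_one, one_mul]
  have key : ∀ n : ℕ, -(1 / 2) < Real.cos (n * (θ - α)) := by
    intro n
    apply cos_gt_of_norm_lt
    have hwn : w ^ n = Complex.exp (↑((n : ℝ) * α) * Complex.I) := by
      rw [← hwα, ← Complex.exp_nat_mul]
      congr 1
      push_cast; ring
    have hfac : Complex.exp (↑((n : ℝ) * θ) * Complex.I) - w ^ n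
        = Complex.exp (↑((n : ℝ) * α) * Complex.I)
          * (Complex.exp (↑((n : ℝ) * (θ - α)) * Complex.I) - 1) := by
      rw [hwn, mul_sub, mul_one, ← Complex.exp_add]
      congr 2
      push_cast; ring
    have hn := h n
    rw [hfac, norm_mul, Complex.norm_exp_ofReal_mul_I,
      one_mul] at hn
    exact hn
  have h1 := rigidcore (θ - α) key
  have : Complex.exp (↑θ * Complex.I)
      = Complex.exp (↑α * Complex.I) * Complex.exp (↑(θ - α) * Complex.I) := by
    rw [← Complex.exp_add]; congr 1; push_cast; ring
  rw [this, h1, mul_one, hwα]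


/-- If `Γ` admits a homogeneous quasimorphism `φ` that is not a homomorphism, then
for `μ_t = exp(2πitφ)` the defect tends to `0` as `t → 0⁺` while
`liminf_{t→0⁺} D(μ_t) ≥ √3`; consequently `def⁽¹⁾(Γ) ≥ √3`, so `Γ` is not
Ulam stable. -/
theorem stmt10 {Γ : Type*} [Group Γ] (φ : Γ → ℝ)
    (hqm : BddAbove (Set.range fun p : Γ × Γ => |φ (p.1 * p.2) - φ p.1 - φ p.2|))
    (hhomog : ∀ (γ : Γ) (n : ℤ), φ (γ ^ n) = n * φ γ)
    (hnothom : ¬ ∀ x y, φ (x * y) = φ x + φ y) :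
    Tendsto (fun t : ℝ => ⨆ p : Γ × Γ,
        ‖Complex.exp (2 * Real.pi * Complex.I * (t * φ (p.1 * p.2)))
          - Complex.exp (2 * Real.pi * Complex.I * (t * φ p.1)) *
              Complex.exp (2 * Real.pi * Complex.I * (t * φ p.2))‖)
      (nhdsWithin 0 (Set.Ioi 0)) (nhds 0)
    ∧ Real.sqrt 3 ≤ liminf (fun t : ℝ => ⨅ ν : Γ →* Circle, ⨆ γ : Γ,
        ‖Complex.exp (2 * Real.pi * Complex.I * (t * φ γ)) - (ν γ : ℂ)‖)
        (nhdsWithin 0 (Set.Ioi 0))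
    ∧ ∀ δ : ℝ, 0 < δ →
        Real.sqrt 3 ≤ sSup {d : ℝ | ∃ μ : Γ → Circle, μ 1 = 1 ∧
          (∀ x y, ‖((μ (x * y) : ℂ)) - (μ x : ℂ) * (μ y : ℂ)‖ ≤ δ) ∧
          d = ⨅ ν : Γ →* Circle, ⨆ γ : Γ, ‖(μ γ : ℂ) - (ν γ : ℂ)‖} := by
  classical
  haveI : Nonempty (Γ →* Circle) := ⟨1⟩
  obtain ⟨D, hD⟩ := hqm
  have hD' : ∀ a b : Γ, |φ (a * b) - φ a - φ b| ≤ D := fun a b => hD ⟨(a, b), rfl⟩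
  have hD0 : 0 ≤ D := le_trans (abs_nonneg _) (hD' 1 1)
  push_neg at hnothom
  obtain ⟨x, y, hxy⟩ := hnothom
  set c := φ (x * y) - φ x - φ y with hcdef
  have hc : c ≠ 0 := by rw [hcdef]; intro h; apply hxy; linarith
  have expeq : ∀ s u : ℝ, Complex.exp (2 * Real.pi * Complex.I * (s * u))
      = Complex.exp (↑(2 * Real.pi * (s * u)) * Complex.I) := by
    intro s u; congr 1; push_cast; ring
  have hnorme : ∀ a b : ℝ, ‖Complex.exp (2 * Real.pi * Complex.I * (a * b))‖ = 1 := by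
    intro a b
    rw [expeq a b, Complex.norm_exp_ofReal_mul_I]
  -- the key rigidity estimate
  have keylem : ∀ t : ℝ, 0 < t → t * |c| < 1 → ∀ ν : Γ →* Circle,
      Real.sqrt 3 ≤ ⨆ γ : Γ, ‖Complex.exp (2 * Real.pi * Complex.I * (t * φ γ)) - (ν γ : ℂ)‖ := by
    intro t ht htc ν
    by_contra hlt
    push_neg at hlt
    have hbdd : BddAbove (Set.range fun γ : Γ =>
        ‖Complex.exp (2 * Real.pi * Complex.I * (t * φ γ)) - (ν γ : ℂ)‖) := by
      refine ⟨2, ?_⟩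
      rintro r ⟨γ, rfl⟩
      have h1 := hnorme t (φ γ)
      have h2 : ‖(ν γ : ℂ)‖ = 1 := by rw [Circle.norm_coe]
      have h3 := norm_sub_le (Complex.exp (2 * Real.pi * Complex.I * (t * φ γ))) ((ν γ : ℂ))
      rw [h1, h2] at h3
      exact h3.trans (by norm_num)
    have hle : ∀ γ : Γ, ‖Complex.exp (2 * Real.pi * Complex.I * (t * φ γ)) - (ν γ : ℂ)‖
        < Real.sqrt 3 := fun γ => lt_of_le_of_lt (le_ciSup hbdd γ) hlt
    have heq : ∀ γ : Γ, Complex.exp (↑(2 * Real.pi * (t * φ γ)) * Complex.I) = (ν γ : ℂ) := by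
      intro γ
      apply rigid
      · exact Circle.norm_coe _
      intro n
      have h2 : φ (γ ^ n) = (n : ℝ) * φ γ := by
        have h := hhomog γ (n : ℤ)
        rw [zpow_natCast] at h
        exact_mod_cast h
      have h3 : ((ν (γ ^ n) : Circle) : ℂ) = ((ν γ : Circle) : ℂ) ^ n := by
        rw [map_pow]; norm_cast
      have h5 : ((n : ℝ) * (2 * Real.pi * (t * φ γ))) = 2 * Real.pi * (t * φ (γ ^ n)) := by
        rw [h2]; ring
      rw [h5, ← h3, ← expeq]
      exact hle (γ ^ n)
    have hν : ((ν (x * y) : Circle) : ℂ) = ((ν x : Circle) : ℂ) * ((ν y : Circle) : ℂ) := by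
      rw [map_mul]; norm_cast
    have hmain : Complex.exp (↑(2 * Real.pi * (t * φ (x * y))) * Complex.I)
        = Complex.exp (↑(2 * Real.pi * (t * φ x) + 2 * Real.pi * (t * φ y)) * Complex.I) := by
      rw [heq (x * y), hν, ← heq x, ← heq y, ← Complex.exp_add]
      congr 1; push_cast; ring
    rw [Complex.exp_eq_exp_iff_exists_int] at hmain
    obtain ⟨n, hn⟩ := hmain
    have h6 : (↑(2 * Real.pi * (t * φ (x * y))) : ℂ) * Complex.I
        = ↑(2 * Real.pi * (t * φ x) + 2 * Real.pi * (t * φ y) + n * (2 * Real.pi)) * Complex.I := by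
      rw [hn]; push_cast; ring
    have h7 := mul_right_cancel₀ Complex.I_ne_zero h6
    have hre : 2 * Real.pi * (t * φ (x * y))
        = 2 * Real.pi * (t * φ x) + 2 * Real.pi * (t * φ y) + n * (2 * Real.pi) := by
      exact_mod_cast h7
    have h10 : 2 * Real.pi * (t * c - n) = 0 := by rw [hcdef]; linear_combination hre
    have h9 : t * c = n := by
      rcases mul_eq_zero.mp h10 with h | h
      · exact absurd h (ne_of_gt (by positivity))
      · linarith
    have h12 : |(n : ℝ)| < 1 := by rw [← h9, abs_mul, abs_of_pos ht]; exact htc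
    have h13 : n = 0 := by
      have hb1 : (-1 : ℤ) < n := by exact_mod_cast (abs_lt.mp h12).1
      have hb2 : n < (1 : ℤ) := by exact_mod_cast (abs_lt.mp h12).2
      omega
    rw [h13] at h9
    push_cast at h9
    rcases mul_eq_zero.mp h9 with h | h
    · exact absurd h (ne_of_gt ht)
    · exact hc h
  -- bound the D-quantities by 2
  have hsupb : ∀ (t : ℝ) (ν : Γ →* Circle),
      (⨆ γ : Γ, ‖Complex.exp (2 * Real.pi * Complex.I * (t * φ γ)) - (ν γ : ℂ)‖) ≤ 2 := by
    intro t ν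
    refine Real.iSup_le (fun γ => ?_) (by norm_num)
    have h1 := hnorme t (φ γ)
    have h2 : ‖(ν γ : ℂ)‖ = 1 := by rw [Circle.norm_coe]
    have h3 := norm_sub_le (Complex.exp (2 * Real.pi * Complex.I * (t * φ γ))) ((ν γ : ℂ))
    rw [h1, h2] at h3
    exact h3.trans (by norm_num)
  have hinfb : ∀ t : ℝ,
      (⨅ ν : Γ →* Circle, ⨆ γ : Γ,
        ‖Complex.exp (2 * Real.pi * Complex.I * (t * φ γ)) - (ν γ : ℂ)‖) ≤ 2 := by
    intro t
    refine le_trans (ciInf_le ⟨0, ?_⟩ 1) (hsupb t 1)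
    rintro r ⟨ν, rfl⟩
    exact Real.iSup_nonneg fun γ => norm_nonneg _
  refine ⟨?_, ?_, ?_⟩
  · -- defect tends to 0
    apply squeeze_zero' (g := fun t : ℝ => 2 * Real.pi * D * t)
    · filter_upwards with t
      exact Real.iSup_nonneg fun p => norm_nonneg _
    · filter_upwards [self_mem_nhdsWithin] with t ht
      have ht0 : 0 < t := ht
      refine Real.iSup_le (fun p => ?_) (by positivity)
      have hmerge : Complex.exp (2 * Real.pi * Complex.I * (t * φ p.1)) *
          Complex.exp (2 * Real.pi * Complex.I * (t * φ p.2))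
          = Complex.exp (↑(2 * Real.pi * (t * (φ p.1 + φ p.2))) * Complex.I) := by
        rw [expeq, expeq, ← Complex.exp_add]
        congr 1; push_cast; ring
      rw [hmerge, expeq]
      refine le_trans (chord_le _ _) ?_
      have h2 : |2 * Real.pi * (t * φ (p.1 * p.2)) - 2 * Real.pi * (t * (φ p.1 + φ p.2))|
          = (2 * Real.pi * t) * |φ (p.1 * p.2) - φ p.1 - φ p.2| := by
        rw [← abs_of_pos (show (0:ℝ) < 2 * Real.pi * t by positivity), ← abs_mul]
        congr 1; ring
      rw [h2]
      have h3 : (2 * Real.pi * t) * |φ (p.1 * p.2) - φ p.1 - φ p.2| ≤ (2 * Real.pi * t) * D :=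
        mul_le_mul_of_nonneg_left (hD' p.1 p.2) (by positivity)
      calc (2 * Real.pi * t) * |φ (p.1 * p.2) - φ p.1 - φ p.2| ≤ (2 * Real.pi * t) * D := h3
        _ = 2 * Real.pi * D * t := by ring
    · have h4 : Tendsto (fun t : ℝ => 2 * Real.pi * D * t) (nhds 0)
          (nhds (2 * Real.pi * D * 0)) := (continuous_const.mul continuous_id).tendsto 0
      rw [mul_zero] at h4
      exact h4.mono_left nhdsWithin_le_nhds
  · -- liminf bound
    apply le_liminf_of_le
    · exact (Filter.isBoundedUnder_of ⟨2, hinfb⟩).isCoboundedUnder_ge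
    · have hpos : (0 : ℝ) < 1 / (|c| + 1) := by positivity
      filter_upwards [Ioo_mem_nhdsGT hpos] with t ht
      have ht0 : 0 < t := ht.1
      have habs : 0 ≤ |c| := abs_nonneg c
      have htc : t * |c| < 1 := by
        have h1 : t < 1 / (|c| + 1) := ht.2
        have h2 : t * |c| ≤ t * (|c| + 1) := by nlinarith
        have h3 : t * (|c| + 1) < (1 / (|c| + 1)) * (|c| + 1) := by nlinarith
        have h4 : (1 / (|c| + 1)) * (|c| + 1) = 1 := by field_simp
        linarith
      exact le_ciInf fun ν => keylem t ht0 htc ν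
  · -- def^(1) bound
    intro δ hδ
    set t := min (δ / (2 * Real.pi * D + 1)) (1 / (2 * (|c| + 1))) with htdef
    have ht0 : 0 < t := lt_min (by positivity) (by positivity)
    have habs : 0 ≤ |c| := abs_nonneg c
    have htc : t * |c| < 1 := by
      have h1 : t ≤ 1 / (2 * (|c| + 1)) := min_le_right _ _
      have h3 : t * |c| ≤ (1 / (2 * (|c| + 1))) * |c| := mul_le_mul_of_nonneg_right h1 habs
      have h4 : (1 / (2 * (|c| + 1))) * |c| < 1 := by
        rw [div_mul_eq_mul_div, one_mul, div_lt_one (by positivity)]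
        nlinarith
      linarith
    set μ : Γ → Circle := fun γ => Circle.exp (2 * Real.pi * (t * φ γ)) with hμdef
    have hμcoe : ∀ γ : Γ, (μ γ : ℂ) = Complex.exp (2 * Real.pi * Complex.I * (t * φ γ)) := by
      intro γ
      rw [hμdef]
      simp only [Circle.coe_exp]
      rw [expeq t (φ γ)]
    have hφ1 : φ 1 = 0 := by
      have h := hhomog 1 0
      simpa using h
    have hμ1 : μ 1 = 1 := by
      rw [hμdef]
      simp [hφ1]
    have hdefect : ∀ a b : Γ, ‖((μ (a * b) : ℂ)) - (μ a : ℂ) * (μ b : ℂ)‖ ≤ δ := by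
      intro a b
      rw [hμcoe, hμcoe, hμcoe, expeq]
      have hmerge : Complex.exp (2 * Real.pi * Complex.I * (t * φ a)) *
          Complex.exp (2 * Real.pi * Complex.I * (t * φ b))
          = Complex.exp (↑(2 * Real.pi * (t * (φ a + φ b))) * Complex.I) := by
        rw [expeq, expeq, ← Complex.exp_add]
        congr 1; push_cast; ring
      rw [hmerge]
      refine le_trans (chord_le _ _) ?_
      have h2 : |2 * Real.pi * (t * φ (a * b)) - 2 * Real.pi * (t * (φ a + φ b))|
          = (2 * Real.pi * t) * |φ (a * b) - φ a - φ b| := by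
        rw [← abs_of_pos (show (0:ℝ) < 2 * Real.pi * t by positivity), ← abs_mul]
        congr 1; ring
      rw [h2]
      have h3 : (2 * Real.pi * t) * |φ (a * b) - φ a - φ b| ≤ (2 * Real.pi * t) * D :=
        mul_le_mul_of_nonneg_left (hD' a b) (by positivity)
      have h5 : t ≤ δ / (2 * Real.pi * D + 1) := min_le_left _ _
      have hM : (0:ℝ) < 2 * Real.pi * D + 1 := by positivity
      have h6 : (2 * Real.pi * t) * D ≤ (2 * Real.pi * (δ / (2 * Real.pi * D + 1))) * D := by
        have := mul_le_mul_of_nonneg_right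
          (mul_le_mul_of_nonneg_left h5 (show (0:ℝ) ≤ 2 * Real.pi by positivity)) hD0
        linarith
      have h7 : (2 * Real.pi * (δ / (2 * Real.pi * D + 1))) * D ≤ δ := by
        rw [show (2 * Real.pi * (δ / (2 * Real.pi * D + 1))) * D
            = 2 * Real.pi * δ * D / (2 * Real.pi * D + 1) by ring]
        rw [div_le_iff₀ hM]
        nlinarith
      linarith
    have hd3 : Real.sqrt 3 ≤ ⨅ ν : Γ →* Circle, ⨆ γ : Γ, ‖(μ γ : ℂ) - (ν γ : ℂ)‖ := by
      refine le_ciInf fun ν => ?_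
      simpa only [hμcoe] using keylem t ht0 htc ν
    have hbddS : BddAbove {d : ℝ | ∃ μ' : Γ → Circle, μ' 1 = 1 ∧
        (∀ x y, ‖((μ' (x * y) : ℂ)) - (μ' x : ℂ) * (μ' y : ℂ)‖ ≤ δ) ∧
        d = ⨅ ν : Γ →* Circle, ⨆ γ : Γ, ‖(μ' γ : ℂ) - (ν γ : ℂ)‖} := by
      refine ⟨2, ?_⟩
      rintro r ⟨μ', h1', h2', rfl⟩
      refine le_trans (ciInf_le ⟨0, ?_⟩ 1) ?_
      · rintro s ⟨ν, rfl⟩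
        exact Real.iSup_nonneg fun γ => norm_nonneg _
      · refine Real.iSup_le (fun γ => ?_) (by norm_num)
        have h2 : ‖(μ' γ : ℂ)‖ = 1 := by rw [Circle.norm_coe]
        have h3 : ‖(((1 : Γ →* Circle) γ : Circle) : ℂ)‖ = 1 := by
          simp
        have h4 := norm_sub_le ((μ' γ : ℂ)) ((((1 : Γ →* Circle) γ : Circle)) : ℂ)
        rw [h2, h3] at h4
        exact h4.trans (by norm_num)
    exact le_csSup_of_le hbddS ⟨μ, hμ1, hdefect, rfl⟩ hd3
end

section
/- In Rolli's construction, if additionally the product τ_a(k)τ_b(k) has infinite order in U(n) for every k ≥ 1, then D(μ) ≥ 2 - δ/3, i.e., every homomorphism ν : F₂ → U(n) satisfies sup_w ‖μ(w) - ν(w)‖ ≥ 2 - δ/3. -/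
/-- The product of the images under `τ` of the syllables of a reduced word,
read from a list of letters: `rolliAux τ g k L` accumulates the current
syllable `g^k` and processes the remaining letters `L`. -/
def rolliAux {M : Type*} [Group M] (τ : Bool → ℤ → M) :
    Bool → ℤ → List (Bool × Bool) → M
  | g, k, [] => τ g k
  | g, k, (x, s) :: rest =>
    if x = g then rolliAux τ g (k + (if s then 1 else -1)) rest
    else τ g k * rolliAux τ x (if s then 1 else -1) rest

/-- Rolli's map `μ : F₂ → U(n)` determined by `τ_a = τ true` and `τ_b = τ false`:
on a reduced word `a^{n₁} b^{m₁} ⋯ a^{n_k} b^{m_k}` it is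
`τ_a n₁ · τ_b m₁ ⋯ τ_a n_k · τ_b m_k`. -/
def rolli {M : Type*} [Group M] (τ : Bool → ℤ → M) (w : FreeGroup Bool) : M :=
  match FreeGroup.toWord w with
  | [] => 1
  | (x, s) :: rest => rolliAux τ x (if s then 1 else -1) rest

lemma reduce_of_forall_true {L : List (Bool × Bool)} (h : ∀ p ∈ L, p.2 = true) :
    FreeGroup.reduce L = L := by
  induction L with
  | nil => rfl
  | cons x t ih =>
    have ht : FreeGroup.reduce t = t := ih fun p hp => h p (List.mem_cons_of_mem _ hp)
    rw [FreeGroup.reduce.cons, ht]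
    cases t with
    | nil => rfl
    | cons q t' =>
      have hx : x.2 = true := h x List.mem_cons_self
      have hq : q.2 = true := h q (by simp)
      simp [hx, hq]

def wrd (k : ℕ) : List (Bool × Bool) :=
  List.replicate k (true, true) ++ List.replicate k (false, true)

lemma of_pow_eq_mk (g : Bool) (k : ℕ) :
    (FreeGroup.of g ^ k : FreeGroup Bool) = FreeGroup.mk (List.replicate k (g, true)) := by
  induction k with
  | zero => rfl
  | succ k ih =>
    rw [pow_succ', ih]
    show FreeGroup.mk [(g, true)] * _ = _
    rw [FreeGroup.mul_mk, List.replicate_succ]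
    rfl

lemma abk_eq_mk (k m : ℕ) :
    ((FreeGroup.of true ^ k * FreeGroup.of false ^ k : FreeGroup Bool)) ^ m =
      FreeGroup.mk (List.flatten (List.replicate m (wrd k))) := by
  rw [of_pow_eq_mk, of_pow_eq_mk, FreeGroup.mul_mk, FreeGroup.pow_mk]
  rfl

lemma toWord_abk (k m : ℕ) :
    ((FreeGroup.of true ^ k * FreeGroup.of false ^ k : FreeGroup Bool) ^ m).toWord =
      List.flatten (List.replicate m (wrd k)) := by
  rw [abk_eq_mk, FreeGroup.toWord_mk]
  apply reduce_of_forall_true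
  intro p hp
  simp only [List.mem_flatten, List.mem_replicate] at hp
  obtain ⟨l, ⟨-, rfl⟩, hpl⟩ := hp
  simp only [wrd, List.mem_append, List.mem_replicate] at hpl
  rcases hpl with ⟨-, rfl⟩ | ⟨-, rfl⟩ <;> rfl

section rolliComp
variable {M : Type*} [Group M] (τ : Bool → ℤ → M)

lemma rolliAux_nil (g : Bool) (c : ℤ) : rolliAux τ g c [] = τ g c := rfl

lemma rolliAux_cons_same (g : Bool) (c : ℤ) (rest : List (Bool × Bool)) :
    rolliAux τ g c ((g, true) :: rest) = rolliAux τ g (c + 1) rest := by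
  simp [rolliAux]

lemma rolliAux_cons_ne {g x : Bool} (h : x ≠ g) (c : ℤ) (rest : List (Bool × Bool)) :
    rolliAux τ g c ((x, true) :: rest) = τ g c * rolliAux τ x 1 rest := by
  simp [rolliAux, h]

lemma rolliAux_replicate (g : Bool) (j : ℕ) : ∀ (c : ℤ) (rest : List (Bool × Bool)),
    rolliAux τ g c (List.replicate j (g, true) ++ rest) = rolliAux τ g (c + j) rest := by
  induction j with
  | zero => intro c rest; simp
  | succ j ih =>
    intro c rest
    rw [List.replicate_succ, List.cons_append, rolliAux_cons_same, ih]
    congr 1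
    push_cast
    ring

lemma rolliAux_flatten (k : ℕ) : ∀ (m : ℕ) (c : ℤ),
    rolliAux τ false c (List.flatten (List.replicate m (wrd (k + 1)))) =
      τ false c * (τ true (k + 1) * τ false (k + 1)) ^ m := by
  intro m
  induction m with
  | zero => intro c; simp [rolliAux_nil]
  | succ m ih =>
    intro c
    rw [List.replicate_succ, List.flatten_cons]
    have : wrd (k + 1) ++ List.flatten (List.replicate m (wrd (k + 1))) =
        (true, true) :: (List.replicate k (true, true) ++
          ((false, true) :: (List.replicate k (false, true) ++
            List.flatten (List.replicate m (wrd (k + 1)))))) := by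
      simp [wrd, List.replicate_succ, List.append_assoc]
    rw [this, rolliAux_cons_ne τ (by simp), rolliAux_replicate,
      rolliAux_cons_ne τ (by simp), rolliAux_replicate, ih]
    have hcast : ((1 : ℤ) + (k : ℤ)) = ((k : ℕ) + 1 : ℤ) := by ring
    rw [hcast]
    rw [pow_succ']
    group

lemma rolli_abk (k m : ℕ) (hk : 1 ≤ k) (hm : 1 ≤ m) :
    rolli τ ((FreeGroup.of true ^ k * FreeGroup.of false ^ k) ^ m) =
      (τ true (k : ℤ) * τ false (k : ℤ)) ^ m := by
  obtain ⟨k', rfl⟩ : ∃ k', k = k' + 1 := ⟨k - 1, by omega⟩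
  obtain ⟨m', rfl⟩ : ∃ m', m = m' + 1 := ⟨m - 1, by omega⟩
  have hw : ((FreeGroup.of true ^ (k' + 1) * FreeGroup.of false ^ (k' + 1) :
      FreeGroup Bool) ^ (m' + 1)).toWord =
      (true, true) :: (List.replicate k' (true, true) ++
        ((false, true) :: (List.replicate k' (false, true) ++
          List.flatten (List.replicate m' (wrd (k' + 1)))))) := by
    rw [toWord_abk]
    rw [List.replicate_succ, List.flatten_cons]
    simp [wrd, List.replicate_succ, List.append_assoc]
  rw [rolli, hw]
  simp only [if_pos rfl]
  rw [rolliAux_replicate, rolliAux_cons_ne τ (by simp), rolliAux_replicate,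
    rolliAux_flatten]
  have hcast : ((1 : ℤ) + (k' : ℤ)) = ((k' : ℕ) + 1 : ℤ) := by ring
  rw [hcast, pow_succ']
  push_cast
  group

lemma rolli_of_pow (g : Bool) (m : ℕ) (hm : 1 ≤ m) :
    rolli τ (FreeGroup.of g ^ m) = τ g (m : ℤ) := by
  obtain ⟨m', rfl⟩ : ∃ m', m = m' + 1 := ⟨m - 1, by omega⟩
  have hw : ((FreeGroup.of g : FreeGroup Bool) ^ (m' + 1)).toWord =
      (g, true) :: List.replicate m' (g, true) := by
    rw [FreeGroup.toWord_of_pow, List.replicate_succ]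
  rw [rolli, hw]
  simp only [if_pos rfl]
  rw [show List.replicate m' (g, true) = List.replicate m' (g, true) ++ [] by simp,
    rolliAux_replicate, rolliAux_nil]
  congr 1
  push_cast
  ring

end rolliComp

open scoped Real Pointwise

set_option maxHeartbeats 1000000 in
lemma lemA {A : Type*} [CStarAlgebra A] [NormOneClass A] [ProperSpace A]
    (c : ℝ) (hc2 : c < 2) (u : A) (hu : u ∈ unitary A)
    (hc : ∀ m : ℕ, 1 ≤ m → ‖u ^ m - 1‖ ≤ c) :
    ∃ N : ℕ, 1 ≤ N ∧ u ^ N = 1 := by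
  haveI : Nontrivial A := ⟨⟨1, 0, by
    intro h
    have h2 : ‖(1:A)‖ = 1 := norm_one
    rw [h, norm_zero] at h2
    exact zero_ne_one h2⟩⟩
  by_contra hcon
  push_neg at hcon
  have hc0 : 0 ≤ c := le_trans (norm_nonneg _) (hc 1 le_rfl)
  have hπ : (0:ℝ) < π := Real.pi_pos
  set ε : ℝ := min 1 ((2 - c) / π) with hεdef
  have hε : 0 < ε := lt_min one_pos (div_pos (by linarith) hπ)
  have hε1 : ε ≤ 1 := min_le_left _ _
  have hε2 : ε ≤ (2 - c) / π := min_le_right _ _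
  -- find p ≥ 1 with u^p ≠ 1 and ‖u^p - 1‖ < ε
  obtain ⟨p, hp1, hpε⟩ : ∃ p : ℕ, 1 ≤ p ∧ ‖u ^ p - 1‖ < ε := by
    have hbdd : ∀ m : ℕ, u ^ m ∈ Metric.closedBall (0 : A) 1 := by
      intro m
      rw [Metric.mem_closedBall, dist_zero_right]
      exact le_of_eq (CStarRing.norm_of_mem_unitary (pow_mem hu m))
    obtain ⟨x, -, φ, hφ, hconv⟩ :=
      tendsto_subseq_of_bounded Metric.isBounded_closedBall hbdd
    have hcauchy : CauchySeq (fun i => u ^ (φ i)) := hconv.cauchySeq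
    rw [Metric.cauchySeq_iff] at hcauchy
    obtain ⟨N, hN⟩ := hcauchy ε hε
    have h1 := hN (N + 1) (by omega) N le_rfl
    have hlt : φ N < φ (N + 1) := hφ (by omega)
    refine ⟨φ (N + 1) - φ N, by omega, ?_⟩
    have heq : u ^ (φ (N + 1)) - u ^ (φ N) = (u ^ (φ (N + 1) - φ N) - 1) * u ^ (φ N) := by
      rw [sub_mul, one_mul, ← pow_add]
      congr 2
      omega
    have hnorm : ‖(u ^ (φ (N + 1) - φ N) - 1) * u ^ (φ N)‖ =
        ‖u ^ (φ (N + 1) - φ N) - 1‖ :=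
      CStarRing.norm_mul_mem_unitary _ (pow_mem hu (φ N))
    rw [dist_eq_norm, heq, hnorm] at h1
    exact h1
  set v : A := u ^ p with hv
  have hvu : v ∈ unitary A := pow_mem hu p
  have hvne : v ≠ 1 := hcon p hp1
  have hr : 0 < ‖v - 1‖ := by
    rw [norm_pos_iff, sub_ne_zero]
    exact hvne
  have h1v : star v * v = 1 := hvu.1
  have h2v : v * star v = 1 := hvu.2
  haveI hnormal : IsStarNormal (v - 1) := by
    constructor
    have hcomm : Commute (star v) v := by
      show star v * v = v * star v
      rw [h1v, h2v]
    have : Commute (star v - 1) (v - 1) :=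
      Commute.sub_left (hcomm.sub_right (Commute.one_right (star v)))
        ((Commute.one_left v).sub_right (Commute.one_right 1))
    simpa [star_sub, star_one] using this
  obtain ⟨μ0, hμ0, hμ0big⟩ : ∃ μ0 ∈ spectrum ℂ (v - 1), ‖v - 1‖ / 2 ≤ ‖μ0‖ := by
    by_contra h
    push_neg at h
    have hsr := IsStarNormal.spectralRadius_eq_nnnorm (v - 1)
    have hle : spectralRadius ℂ (v - 1) ≤ ENNReal.ofReal (‖v - 1‖ / 2) := by
      rw [spectralRadius]
      refine iSup₂_le fun μ hμ => ?_
      rw [show (‖μ‖₊ : ENNReal) = ENNReal.ofReal ‖μ‖ from (ofReal_norm μ).symm]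
      exact ENNReal.ofReal_le_ofReal (h μ hμ).le
    rw [hsr, show (‖v - 1‖₊ : ENNReal) = ENNReal.ofReal ‖v - 1‖ from (ofReal_norm _).symm] at hle
    rw [ENNReal.ofReal_le_ofReal_iff (by positivity)] at hle
    linarith
  set l : ℂ := 1 + μ0 with hl
  have hlmem : l ∈ spectrum ℂ v := by
    have h' : l ∈ ({(1 : ℂ)} + spectrum ℂ (v - 1)) := Set.add_mem_add rfl hμ0
    rw [spectrum.singleton_add_eq] at h'
    simpa [map_one] using h'
  have habs : ‖l‖ = 1 := by
    have := spectrum.subset_circle_of_unitary hvu hlmem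
    rwa [mem_sphere_zero_iff_norm] at this
  have hl1lo : ‖v - 1‖ / 2 ≤ ‖l - 1‖ := by simpa [hl] using hμ0big
  have hl1hi : ‖l - 1‖ ≤ ‖v - 1‖ := by
    have : l - 1 ∈ spectrum ℂ (v - 1) := by simpa [hl] using hμ0
    exact spectrum.norm_le_norm_of_mem this
  have hlne : l ≠ 1 := by
    intro h
    rw [h, sub_self, norm_zero] at hl1lo
    linarith
  have hpows : ∀ m : ℕ, 1 ≤ m → ‖l ^ m - 1‖ ≤ c := by
    intro m hm
    have h1 : l ^ m ∈ spectrum ℂ (v ^ m) := by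
      have hsub := spectrum.subset_polynomial_aeval v ((Polynomial.X : Polynomial ℂ) ^ m)
      have hmem : l ^ m ∈ (fun x => Polynomial.eval x ((Polynomial.X : Polynomial ℂ) ^ m)) ''
          spectrum ℂ v := ⟨l, hlmem, by simp⟩
      have h2 := hsub hmem
      simpa [map_pow] using h2
    have h2 : l ^ m - 1 ∈ spectrum ℂ (v ^ m - 1) := by
      have h3 : l ^ m - 1 ∈ spectrum ℂ (v ^ m) - {(1 : ℂ)} := Set.sub_mem_sub h1 rfl
      rw [spectrum.sub_singleton_eq] at h3
      simpa [map_one] using h3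
    have h4 : ‖l ^ m - 1‖ ≤ ‖v ^ m - 1‖ := spectrum.norm_le_norm_of_mem h2
    have h5 : v ^ m = u ^ (p * m) := by rw [hv, pow_mul]
    calc ‖l ^ m - 1‖ ≤ ‖v ^ m - 1‖ := h4
      _ ≤ c := by rw [h5]; exact hc _ (Nat.mul_pos hp1 hm)
  -- trigonometry
  set θ : ℝ := Complex.arg l with hθ
  have hlexp : l = Complex.exp (θ * Complex.I) := by
    have h := Complex.norm_mul_exp_arg_mul_I l
    rw [show ‖l‖ = 1 by exact habs] at h
    simpa using h.symm
  have hre : ∀ m : ℕ, (l ^ m).re = Real.cos (m * θ) := by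
    intro m
    rw [hlexp, ← Complex.exp_nat_mul,
      show (m : ℂ) * (θ * Complex.I) = ((m * θ : ℝ) : ℂ) * Complex.I by push_cast; ring]
    exact Complex.exp_ofReal_mul_I_re _
  have him : l.im = Real.sin θ := by
    rw [hlexp, show (θ : ℂ) * Complex.I = ((θ : ℝ) : ℂ) * Complex.I from rfl]
    exact Complex.exp_ofReal_mul_I_im _
  have hnormsq : ∀ m : ℕ, ‖l ^ m - 1‖ ^ 2 = 2 - 2 * Real.cos (m * θ) := by
    intro m
    have habsm : ‖l ^ m‖ = 1 := by rw [norm_pow, habs, one_pow]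
    have h1 : ‖l ^ m - 1‖ ^ 2 = Complex.normSq (l ^ m - 1) := by
      rw [← Complex.sq_norm]
    have h3 : ((l ^ m).re) ^ 2 + ((l ^ m).im) ^ 2 = 1 := by
      have h4 := Complex.sq_norm (l ^ m)
      rw [Complex.normSq_apply, habsm] at h4
      nlinarith [h4]
    rw [hre m] at h3
    rw [h1, Complex.normSq_apply, Complex.sub_re, Complex.sub_im, Complex.one_re,
      Complex.one_im, sub_zero, hre m]
    nlinarith [h3]
  set θ0 : ℝ := |θ| with hθ0
  have hθ0pos : 0 < θ0 := by
    rw [hθ0, abs_pos]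
    intro h
    apply hlne
    rw [hlexp, h]
    simp
  have hθ0pi : θ0 ≤ π := Complex.abs_arg_le_pi l
  have hcosθ : Real.cos θ0 = Real.cos θ := Real.cos_abs θ
  -- ‖l - 1‖² = 2 - 2 cos θ0
  have hsq1 : ‖l - 1‖ ^ 2 = 2 - 2 * Real.cos θ0 := by
    have := hnormsq 1
    rw [pow_one] at this
    rw [this, hcosθ]
    norm_num
  have hlt1 : ‖l - 1‖ < 1 := lt_of_lt_of_le (lt_of_le_of_lt hl1hi hpε) hε1
  have hcos_half : (1:ℝ)/2 < Real.cos θ0 := by nlinarith [norm_nonneg (l - 1)]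
  have hθ0small : θ0 < π / 2 := by
    by_contra hcontra
    push_neg at hcontra
    have : Real.cos θ0 ≤ 0 :=
      Real.cos_nonpos_of_pi_div_two_le_of_le hcontra (by linarith)
    linarith
  -- Jordan inequality
  have hsinle : Real.sin θ0 ≤ ‖l - 1‖ := by
    have him1 : |l.im| ≤ ‖l - 1‖ := by
      have : (l - 1).im = l.im := by simp
      calc |l.im| = |(l - 1).im| := by rw [this]
        _ ≤ ‖l - 1‖ := Complex.abs_im_le_norm _
    rcases le_or_gt 0 θ with hθpos | hθneg
    · rw [hθ0, abs_of_nonneg hθpos]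
      calc Real.sin θ = l.im := him.symm
        _ ≤ |l.im| := le_abs_self _
        _ ≤ ‖l - 1‖ := him1
    · rw [hθ0, abs_of_neg hθneg, Real.sin_neg]
      calc -Real.sin θ = -l.im := by rw [him]
        _ ≤ |l.im| := neg_le_abs _
        _ ≤ ‖l - 1‖ := him1
  have hjordan : 2 / π * θ0 ≤ Real.sin θ0 := Real.mul_le_sin hθ0pos.le (by linarith)
  have hθ0bound : θ0 < (2 - c) / 2 := by
    have h1 : 2 / π * θ0 < (2 - c) / π := by
      calc 2 / π * θ0 ≤ Real.sin θ0 := hjordan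
        _ ≤ ‖l - 1‖ := hsinle
        _ < ε := lt_of_le_of_lt hl1hi hpε
        _ ≤ (2 - c) / π := hε2
    have h2 := mul_lt_mul_of_pos_right h1 hπ
    rw [div_mul_cancel₀ _ (ne_of_gt hπ)] at h2
    have h3 : 2 / π * θ0 * π = 2 * θ0 := by field_simp
    rw [h3] at h2
    linarith
  -- choose m with m θ0 ∈ [π, π + θ0)
  set m : ℕ := ⌈π / θ0⌉₊ with hm
  have hm1 : 1 ≤ m := Nat.one_le_iff_ne_zero.mpr (by
    rw [hm, ← Nat.pos_iff_ne_zero, Nat.ceil_pos]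
    positivity)
  have hmlo : π ≤ m * θ0 := by
    have := Nat.le_ceil (π / θ0)
    calc π = π / θ0 * θ0 := by field_simp
      _ ≤ m * θ0 := by nlinarith [this]
  have hmhi : m * θ0 < π + θ0 := by
    have h1 : (m : ℝ) < π / θ0 + 1 := Nat.ceil_lt_add_one (by positivity)
    have h2 : π / θ0 * θ0 = π := div_mul_cancel₀ _ (ne_of_gt hθ0pos)
    nlinarith [mul_lt_mul_of_pos_right h1 hθ0pos]
  -- cos (m θ0) ≤ - cos θ0
  have hcosm : Real.cos (m * θ0) ≤ -Real.cos θ0 := by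
    have h1 : m * θ0 = (m * θ0 - π) + π := by ring
    rw [h1, Real.cos_add_pi]
    have h2 : Real.cos (m * θ0 - π) ≥ Real.cos θ0 := by
      apply Real.cos_le_cos_of_nonneg_of_le_pi (by linarith) (by linarith) (by linarith)
    linarith
  have hcosθ0lb : 1 - θ0 ^ 2 / 2 ≤ Real.cos θ0 := Real.one_sub_sq_div_two_le_cos
  -- final contradiction
  have hfin := hpows m hm1
  have hsqm : ‖l ^ m - 1‖ ^ 2 = 2 - 2 * Real.cos (m * θ0) := by
    rw [hnormsq m]
    congr 1
    rw [hθ0, ← Real.cos_abs (m * θ), abs_mul, Nat.abs_cast]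
  have hge : 4 - θ0 ^ 2 ≤ ‖l ^ m - 1‖ ^ 2 := by
    rw [hsqm]
    nlinarith [hcosm, hcosθ0lb]
  have hcsq : ‖l ^ m - 1‖ ^ 2 ≤ c ^ 2 := by nlinarith [norm_nonneg (l ^ m - 1), hfin]
  nlinarith [hge, hcsq, hθ0bound, hθ0pos, hc0, hc2]


set_option maxHeartbeats 1000000 in
set_option synthInstance.maxHeartbeats 1000000 in
/-- In Rolli's construction, if moreover `τ_a(k) τ_b(k)` has infinite order for
every `k ≥ 1`, then every homomorphism `ν : F₂ → U(n)` is at uniform distance at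
least `2 - δ/3` from `μ`, i.e. `D(μ) ≥ 2 - δ/3`. -/
theorem stmt13 (n : ℕ) (δ : ℝ) (hδ : 0 < δ)
    (τ : Bool → ℤ →
      unitary (EuclideanSpace ℂ (Fin n) →L[ℂ] EuclideanSpace ℂ (Fin n)))
    (h0 : ∀ g, τ g 0 = 1) (hinv : ∀ g k, τ g (-k) = (τ g k)⁻¹)
    (hclose : ∀ g k,
      ‖(τ g k : EuclideanSpace ℂ (Fin n) →L[ℂ] EuclideanSpace ℂ (Fin n)) - 1‖ ≤ δ / 3)
    (hord : ∀ k : ℤ, 1 ≤ k → ∀ m : ℕ, 1 ≤ m → (τ true k * τ false k) ^ m ≠ 1) :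
    ∀ ν : FreeGroup Bool →*
        unitary (EuclideanSpace ℂ (Fin n) →L[ℂ] EuclideanSpace ℂ (Fin n)),
      2 - δ / 3 ≤ ⨆ w : FreeGroup Bool,
        ‖(↑(rolli τ w) - ↑(ν w) :
            EuclideanSpace ℂ (Fin n) →L[ℂ] EuclideanSpace ℂ (Fin n))‖ := by
  intro ν
  rcases Nat.eq_zero_or_pos n with hn0 | hn
  · exfalso
    subst hn0
    haveI : Subsingleton (EuclideanSpace ℂ (Fin 0) →L[ℂ] EuclideanSpace ℂ (Fin 0)) := by
      infer_instance
    haveI : Subsingleton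
        (unitary (EuclideanSpace ℂ (Fin 0) →L[ℂ] EuclideanSpace ℂ (Fin 0))) :=
      ⟨fun a b => Subtype.ext (Subsingleton.elim _ _)⟩
    exact hord 1 le_rfl 1 le_rfl (Subsingleton.elim _ _)
  haveI : Nonempty (Fin n) := Fin.pos_iff_nonempty.mp hn
  haveI : ProperSpace (EuclideanSpace ℂ (Fin n) →L[ℂ] EuclideanSpace ℂ (Fin n)) :=
    FiniteDimensional.proper ℂ _
  by_contra hS
  push_neg at hS
  set f : FreeGroup Bool → ℝ := fun w =>
    ‖(↑(rolli τ w) - ↑(ν w) :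
      EuclideanSpace ℂ (Fin n) →L[ℂ] EuclideanSpace ℂ (Fin n))‖ with hf
  have hbdd : BddAbove (Set.range f) := by
    refine ⟨2, ?_⟩
    rintro x ⟨w, rfl⟩
    calc f w ≤ ‖(↑(rolli τ w) : EuclideanSpace ℂ (Fin n) →L[ℂ] EuclideanSpace ℂ (Fin n))‖
          + ‖(↑(ν w) : EuclideanSpace ℂ (Fin n) →L[ℂ] EuclideanSpace ℂ (Fin n))‖ :=
        norm_sub_le _ _
      _ ≤ 2 := by
        rw [CStarRing.norm_coe_unitary, CStarRing.norm_coe_unitary]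
        norm_num
  have hle : ∀ w, f w ≤ ⨆ w, f w := fun w => le_ciSup hbdd w
  set S : ℝ := ⨆ w, f w with hSdef
  have hS' : S < 2 - δ / 3 := hS
  have hδ3 : (0:ℝ) < δ / 3 := by linarith
  -- ν (of g) has finite order
  have hfin : ∀ g : Bool, ∃ N : ℕ, 1 ≤ N ∧
      ((ν (FreeGroup.of g) : unitary _) :
        EuclideanSpace ℂ (Fin n) →L[ℂ] EuclideanSpace ℂ (Fin n)) ^ N = 1 := by
    intro g
    apply lemA (S + δ / 3) (by linarith) _ (ν (FreeGroup.of g)).2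
    intro m hm
    have h1 : rolli τ (FreeGroup.of g ^ m) = τ g (m : ℤ) := rolli_of_pow τ g m hm
    have h2 : ((ν (FreeGroup.of g ^ m)) :
        EuclideanSpace ℂ (Fin n) →L[ℂ] EuclideanSpace ℂ (Fin n)) =
        ((ν (FreeGroup.of g)) :
          EuclideanSpace ℂ (Fin n) →L[ℂ] EuclideanSpace ℂ (Fin n)) ^ m := by
      rw [map_pow]
      exact SubmonoidClass.coe_pow _ m
    have h3 : f (FreeGroup.of g ^ m) ≤ S := hle _
    rw [hf] at h3
    simp only [h1, h2] at h3
    calc ‖((ν (FreeGroup.of g)) :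
          EuclideanSpace ℂ (Fin n) →L[ℂ] EuclideanSpace ℂ (Fin n)) ^ m - 1‖
        ≤ ‖((ν (FreeGroup.of g)) :
            EuclideanSpace ℂ (Fin n) →L[ℂ] EuclideanSpace ℂ (Fin n)) ^ m
            - (τ g (m : ℤ) : EuclideanSpace ℂ (Fin n) →L[ℂ] EuclideanSpace ℂ (Fin n))‖
          + ‖(τ g (m : ℤ) : EuclideanSpace ℂ (Fin n) →L[ℂ] EuclideanSpace ℂ (Fin n)) - 1‖ :=
        norm_sub_le_norm_sub_add_norm_sub _ _ _
      _ ≤ S + δ / 3 := by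
        refine add_le_add ?_ (hclose g _)
        rw [norm_sub_rev]
        exact h3
  obtain ⟨Na, hNa1, hNa⟩ := hfin true
  obtain ⟨Nb, hNb1, hNb⟩ := hfin false
  set k : ℕ := Na * Nb with hk
  have hk1 : 1 ≤ k := Nat.mul_pos hNa1 hNb1
  have hνk : ((ν (FreeGroup.of true ^ k * FreeGroup.of false ^ k)) :
      EuclideanSpace ℂ (Fin n) →L[ℂ] EuclideanSpace ℂ (Fin n)) = 1 := by
    rw [map_mul, map_pow, map_pow, MulMemClass.coe_mul, SubmonoidClass.coe_pow,
      SubmonoidClass.coe_pow, hk, pow_mul, hNa, one_pow, one_mul, mul_comm Na Nb,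
      pow_mul, hNb, one_pow]
  -- the powers of τ true k * τ false k are uniformly close to 1
  set P : EuclideanSpace ℂ (Fin n) →L[ℂ] EuclideanSpace ℂ (Fin n) :=
    ((τ true (k : ℤ) * τ false (k : ℤ) : unitary _) :
      EuclideanSpace ℂ (Fin n) →L[ℂ] EuclideanSpace ℂ (Fin n)) with hP
  have hPpow : ∀ m : ℕ, 1 ≤ m → ‖P ^ m - 1‖ ≤ S + δ / 3 := by
    intro m hm
    have h3 : f ((FreeGroup.of true ^ k * FreeGroup.of false ^ k) ^ m) ≤ S := hle _
    rw [hf] at h3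
    simp only [rolli_abk τ k m hk1 hm, map_pow, hνk] at h3
    have h4 : ((ν ((FreeGroup.of true ^ k * FreeGroup.of false ^ k)) ^ m :
        unitary _) : EuclideanSpace ℂ (Fin n) →L[ℂ] EuclideanSpace ℂ (Fin n)) = 1 := by
      rw [SubmonoidClass.coe_pow, hνk, one_pow]
    rw [h4] at h3
    have h5 : (((τ true (k : ℤ) * τ false (k : ℤ) : unitary _) ^ m : unitary _) :
        EuclideanSpace ℂ (Fin n) →L[ℂ] EuclideanSpace ℂ (Fin n)) = P ^ m :=
      SubmonoidClass.coe_pow _ m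
    rw [h5] at h3
    linarith
  obtain ⟨N, hN1, hNP⟩ :=
    lemA (S + δ / 3) (by linarith) P (τ true (k : ℤ) * τ false (k : ℤ)).2 hPpow
  refine hord (k : ℤ) (by exact_mod_cast hk1) N hN1 ?_
  apply Subtype.ext
  rw [SubmonoidClass.coe_pow]
  exact hNP
end

section
/- Let u ∈ U(n) and ε > 0 such that ‖u^k - Id‖ ≤ 2 - ε for all k ∈ ℤ. Then u has finite order: there exists m ≥ 1 with u^m = Id. -/
open Real Complex Pointwise

/-- For `0 < ψ ≤ π`, some power of `exp (ψ I)` is within `2ψ` of `-1`. -/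
lemma claimB {ψ : ℝ} (h0 : 0 < ψ) :
    ∃ k : ℕ, 2 - 2 * ψ ≤ ‖Complex.exp (ψ * Complex.I) ^ k - 1‖ := by
  rcases le_or_gt 1 ψ with hψ | hψ
  · exact ⟨0, by simp; linarith⟩
  · refine ⟨⌈π / ψ⌉₊, ?_⟩
    have hπψ : 0 ≤ π / ψ := div_nonneg Real.pi_pos.le h0.le
    have hfs : (π / ψ) * ψ = π := by field_simp
    have hk1 : π ≤ (⌈π / ψ⌉₊ : ℝ) * ψ := by
      nlinarith [Nat.le_ceil (π / ψ)]
    have hk2 : (⌈π / ψ⌉₊ : ℝ) * ψ < π + ψ := by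
      nlinarith [Nat.ceil_lt_add_one hπψ]
    obtain ⟨δ, hδ0, hδψ, hke⟩ : ∃ δ : ℝ, 0 ≤ δ ∧ δ < ψ ∧
        (⌈π / ψ⌉₊ : ℝ) * ψ = π + δ :=
      ⟨(⌈π / ψ⌉₊ : ℝ) * ψ - π, by linarith, by linarith, by ring⟩
    have hexp : Complex.exp (ψ * Complex.I) ^ ⌈π / ψ⌉₊ = -Complex.exp (δ * Complex.I) := by
      rw [← Complex.exp_nat_mul]
      have : ((⌈π / ψ⌉₊ : ℕ) : ℂ) * (ψ * Complex.I) = π * Complex.I + δ * Complex.I := by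
        calc ((⌈π / ψ⌉₊ : ℕ) : ℂ) * (ψ * Complex.I)
            = (((⌈π / ψ⌉₊ : ℝ) * ψ : ℝ) : ℂ) * Complex.I := by push_cast; ring
          _ = ((π + δ : ℝ) : ℂ) * Complex.I := by rw [hke]
          _ = π * Complex.I + δ * Complex.I := by push_cast; ring
      rw [this, Complex.exp_add, Complex.exp_pi_mul_I, neg_one_mul]
    rw [hexp]
    have h2δ : ‖Complex.exp (δ * Complex.I) - 1‖ ≤ 2 * δ := by
      have habs : ‖((δ : ℂ) * Complex.I)‖ = δ := by
        simp [_root_.abs_of_nonneg hδ0]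
      have := Complex.norm_exp_sub_one_le (x := (δ : ℂ) * Complex.I)
        (by rw [habs]; linarith)
      rw [habs] at this
      simpa using this
    have htri : (2 : ℝ) ≤ ‖Complex.exp (δ * Complex.I) + 1‖
        + ‖Complex.exp (δ * Complex.I) - 1‖ := by
      have h2 : ‖(Complex.exp (δ * Complex.I) + 1) - (Complex.exp (δ * Complex.I) - 1)‖
          = 2 := by norm_num
      calc (2:ℝ) = _ := h2.symm
        _ ≤ _ := norm_sub_le _ _
    have : ‖-Complex.exp (δ * Complex.I) - 1‖ = ‖Complex.exp (δ * Complex.I) + 1‖ := by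
      rw [show -Complex.exp (δ * Complex.I) - 1 = -(Complex.exp (δ * Complex.I) + 1) by ring,
        norm_neg]
    rw [this]
    linarith

lemma dich {ε : ℝ} (hε : 0 < ε) {z : ℂ} (hz : ‖z‖ = 1)
    (h : ∀ k : ℕ, ‖z ^ k - 1‖ ≤ 2 - ε) : z = 1 ∨ ε / 2 ≤ |Complex.arg z| := by
  by_contra hc
  push_neg at hc
  obtain ⟨hz1, hsmall⟩ := hc
  have habs : ‖z‖ = 1 := hz
  have hzeq : z = Complex.exp (Complex.arg z * Complex.I) := by
    conv_lhs => rw [← Complex.norm_mul_exp_arg_mul_I z]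
    rw [habs]; simp
  have harg0 : Complex.arg z ≠ 0 := by
    intro h0
    apply hz1
    rw [hzeq, h0]; simp
  set ψ := |Complex.arg z| with hψdef
  have hψ0 : 0 < ψ := abs_pos.mpr harg0
  have hpow : ∀ k : ℕ, ‖Complex.exp (ψ * Complex.I) ^ k - 1‖ ≤ 2 - ε := by
    intro k
    rcases le_or_gt 0 (Complex.arg z) with hs | hs
    · rw [show ψ = Complex.arg z from by rw [hψdef, _root_.abs_of_nonneg hs], ← hzeq]
      exact h k
    · have hψeq : (ψ : ℂ) = -(Complex.arg z : ℂ) := by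
        rw [hψdef, _root_.abs_of_neg hs]; push_cast; ring
      have hconj : Complex.exp (ψ * Complex.I) = (starRingEnd ℂ) z := by
        rw [hψeq]
        conv_rhs => rw [hzeq]
        rw [← Complex.exp_conj]
        congr 1
        simp [Complex.conj_I]
      rw [hconj, show ((starRingEnd ℂ) z) ^ k - 1 = (starRingEnd ℂ) (z ^ k - 1) by
        simp, RCLike.norm_conj]
      exact h k
  obtain ⟨k, hk⟩ := claimB hψ0
  have := hpow k
  linarith

lemma floor_bucket {w a b : ℝ} (hw : 0 < w) (ha : 0 ≤ a) (hb : 0 ≤ b)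
    (h : ⌊a / w⌋₊ = ⌊b / w⌋₊) : |a - b| < w := by
  have h1 := Nat.floor_le (div_nonneg ha hw.le)
  have h2 := Nat.lt_floor_add_one (a / w)
  have h3 := Nat.floor_le (div_nonneg hb hw.le)
  have h4 := Nat.lt_floor_add_one (b / w)
  rw [h] at h1 h2
  have haw : a / w * w = a := div_mul_cancel₀ a hw.ne'
  have hbw : b / w * w = b := div_mul_cancel₀ b hw.ne'
  rw [abs_sub_lt_iff]
  constructor
  · nlinarith
  · nlinarith

lemma pow_sub_eq_one {ε : ℝ} (hε : 0 < ε) (hε2 : ε ≤ 2) {z : ℂ} (hz : ‖z‖ = 1)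
    (h : ∀ k : ℕ, ‖z ^ k - 1‖ ≤ 2 - ε) {i j : ℕ} (hlt : j < i)
    (hfl : ⌊(Complex.arg (z ^ i) + π) / (ε / 4)⌋₊
      = ⌊(Complex.arg (z ^ j) + π) / (ε / 4)⌋₊) : z ^ (i - j) = 1 := by
  have hε4 : 0 < ε / 4 := by linarith
  set a := Complex.arg (z ^ i) with ha
  set b := Complex.arg (z ^ j) with hb
  have hpi := Real.pi_gt_three
  have hab : |a - b| < ε / 4 := by
    have := floor_bucket hε4 (by linarith [Complex.neg_pi_lt_arg (z ^ i)])
      (by linarith [Complex.neg_pi_lt_arg (z ^ j)]) hfl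
    simpa using this
  have habpi : |a - b| < π := by linarith [abs_lt.mp hab]
  have hnormi : ‖z ^ i‖ = 1 := by rw [norm_pow, hz, one_pow]
  have hnormj : ‖z ^ j‖ = 1 := by rw [norm_pow, hz, one_pow]
  have hexpi : z ^ i = Complex.exp (a * Complex.I) := by
    conv_lhs => rw [← Complex.norm_mul_exp_arg_mul_I (z ^ i)]
    rw [show ‖z ^ i‖ = 1 from hnormi]
    simp [ha]
  have hexpj : z ^ j = Complex.exp (b * Complex.I) := by
    conv_lhs => rw [← Complex.norm_mul_exp_arg_mul_I (z ^ j)]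
    rw [show ‖z ^ j‖ = 1 from hnormj]
    simp [hb]
  have hzj : z ^ j ≠ 0 := by
    intro h0; rw [h0] at hnormj; simp at hnormj
  have hd : z ^ (i - j) = Complex.exp (((a - b : ℝ)) * Complex.I) := by
    have hmul : z ^ (i - j) * z ^ j = z ^ i := by
      rw [← pow_add]; congr 1; omega
    have : z ^ (i - j) = z ^ i / z ^ j := by
      rw [eq_div_iff hzj, hmul]
    rw [this, hexpi, hexpj, ← Complex.exp_sub]
    congr 1
    push_cast
    ring
  have hargd : Complex.arg (z ^ (i - j)) = a - b := by
    rw [hd, Complex.exp_mul_I, Complex.arg_cos_add_sin_mul_I]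
    constructor
    · linarith [abs_lt.mp habpi]
    · linarith [abs_lt.mp habpi]
  have hpowd : ∀ k : ℕ, ‖(z ^ (i - j)) ^ k - 1‖ ≤ 2 - ε := by
    intro k; rw [← pow_mul]; exact h _
  have hnormd : ‖z ^ (i - j)‖ = 1 := by rw [norm_pow, hz, one_pow]
  rcases dich hε hnormd hpowd with h1 | h1
  · exact h1
  · exfalso
    rw [hargd] at h1
    linarith

lemma rofu {ε : ℝ} (hε : 0 < ε) (hε2 : ε ≤ 2) {z : ℂ} (hz : ‖z‖ = 1)
    (h : ∀ k : ℕ, ‖z ^ k - 1‖ ≤ 2 - ε) :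
    ∃ d : ℕ, 1 ≤ d ∧ d ≤ ⌊2 * π / (ε / 4)⌋₊ + 1 ∧ z ^ d = 1 := by
  set N : ℕ := ⌊2 * π / (ε / 4)⌋₊ + 1 with hN
  have hε4 : 0 < ε / 4 := by linarith
  have key : ∃ i ∈ Finset.range (N + 1), ∃ j ∈ Finset.range (N + 1),
      i ≠ j ∧ (fun j => ⌊(Complex.arg (z ^ j) + π) / (ε / 4)⌋₊) i
        = (fun j => ⌊(Complex.arg (z ^ j) + π) / (ε / 4)⌋₊) j := by
    apply Finset.exists_ne_map_eq_of_card_lt_of_maps_to (t := Finset.range N)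
    · simp
    · intro a _
      simp only [Finset.mem_range]
      have harg := Complex.arg_le_pi (z ^ a)
      have hle : (Complex.arg (z ^ a) + π) / (ε / 4) ≤ 2 * π / (ε / 4) := by
        gcongr
        linarith
      refine Finset.mem_coe.mpr (Finset.mem_range.mpr ?_)
      calc ⌊(Complex.arg (z ^ a) + π) / (ε / 4)⌋₊ ≤ ⌊2 * π / (ε / 4)⌋₊ :=
            Nat.floor_le_floor hle
        _ < N := by omega
  obtain ⟨i, hi, j, hj, hij, heq⟩ := key
  simp only [Finset.mem_range] at hi hj
  simp only at heq
  rcases hij.lt_or_gt with hlt | hlt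
  · exact ⟨j - i, by omega, by omega, pow_sub_eq_one hε hε2 hz h hlt heq.symm⟩
  · exact ⟨i - j, by omega, by omega, pow_sub_eq_one hε hε2 hz h hlt heq⟩

/-- A unitary `u ∈ U(n)` with `‖u^k - 1‖ ≤ 2 - ε` for all integers `k` has finite
order. -/
theorem stmt14 (n : ℕ)
    (u : unitary (EuclideanSpace ℂ (Fin n) →L[ℂ] EuclideanSpace ℂ (Fin n)))
    (ε : ℝ) (hε : 0 < ε)
    (h : ∀ k : ℤ,
      ‖(↑(u ^ k) - 1 : EuclideanSpace ℂ (Fin n) →L[ℂ] EuclideanSpace ℂ (Fin n))‖ ≤ 2 - ε) :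
    ∃ m : ℕ, 1 ≤ m ∧ u ^ m = 1 := by
  set E := EuclideanSpace ℂ (Fin n) with hE
  rcases Nat.eq_zero_or_pos n with hn | hn
  · subst hn
    haveI : Subsingleton E := ⟨fun a b => by ext i; exact i.elim0⟩
    haveI : Subsingleton (E →L[ℂ] E) :=
      ⟨fun f g => ContinuousLinearMap.ext fun x => Subsingleton.elim _ _⟩
    exact ⟨1, le_rfl, Subtype.ext (Subsingleton.elim _ _)⟩
  · haveI : Nontrivial E := by
      refine ⟨EuclideanSpace.single ⟨0, hn⟩ (1 : ℂ), 0, ?_⟩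
      intro h0
      have := congrArg norm h0
      rw [EuclideanSpace.norm_single, norm_zero, norm_one] at this
      exact one_ne_zero this
    haveI : Nontrivial (E →L[ℂ] E) := by
      obtain ⟨x, y, hxy⟩ := exists_pair_ne E
      refine ⟨1, 0, fun h10 => hxy ?_⟩
      have hx := congrArg (fun f => f (x - y)) h10
      simp at hx
      exact sub_eq_zero.mp hx
    -- the norm bound for natural powers
    have hnorm : ∀ k : ℕ, ‖((↑u : E →L[ℂ] E) ^ k) - 1‖ ≤ 2 - ε := by
      intro k
      have := h (k : ℤ)
      rw [zpow_natCast] at this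
      simpa using this
    have hε2 : ε ≤ 2 := by
      have := hnorm 0
      simp at this
      linarith
    set N : ℕ := ⌊2 * π / (ε / 4)⌋₊ + 1 with hN
    -- every spectrum point is a root of unity of order dividing N!
    have hspec : ∀ z ∈ spectrum ℂ (↑u : E →L[ℂ] E), z ^ N.factorial = 1 := by
      intro z hzmem
      have hz1 : ‖z‖ = 1 := by
        have := Unitary.spectrum_subset_circle u hzmem
        simpa [Metric.mem_sphere, Complex.dist_eq] using this
      have hpows : ∀ k : ℕ, ‖z ^ k - 1‖ ≤ 2 - ε := by
        intro k
        have hzk : z ^ k ∈ spectrum ℂ ((↑u : E →L[ℂ] E) ^ k) := by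
          rw [spectrum.map_pow]
          exact ⟨z, hzmem, rfl⟩
        have hsub : z ^ k - 1 ∈ spectrum ℂ (((↑u : E →L[ℂ] E) ^ k) - 1) := by
          have hmem := Set.sub_mem_sub hzk (Set.mem_singleton (1 : ℂ))
          rw [spectrum.sub_singleton_eq] at hmem
          simpa using hmem
        calc ‖z ^ k - 1‖ ≤ ‖((↑u : E →L[ℂ] E) ^ k) - 1‖ :=
              spectrum.norm_le_norm_of_mem hsub
          _ ≤ 2 - ε := hnorm k
      obtain ⟨d, hd1, hdN, hdz⟩ := rofu hε hε2 hz1 hpows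
      have hdvd : d ∣ N.factorial := Nat.dvd_factorial hd1 hdN
      obtain ⟨c, hc⟩ := hdvd
      rw [hc, pow_mul, hdz, one_pow]
    refine ⟨N.factorial, Nat.one_le_iff_ne_zero.mpr (Nat.factorial_ne_zero N), ?_⟩
    -- v := u ^ N!
    set v : E →L[ℂ] E := (↑(u ^ N.factorial) : E →L[ℂ] E) with hv
    have hvcoe : v = (↑u : E →L[ℂ] E) ^ N.factorial := by
      rw [hv]; exact SubmonoidClass.coe_pow u N.factorial
    have hspecv : spectrum ℂ v ⊆ {1} := by
      rw [hvcoe, spectrum.map_pow]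
      rintro _ ⟨z, hz, rfl⟩
      exact hspec z hz
    -- v - 1 is star-normal
    have hmem := (u ^ N.factorial).prop
    rw [Unitary.mem_iff] at hmem
    haveI : IsStarNormal (v - 1) := by
      constructor
      show star (v - 1) * (v - 1) = (v - 1) * star (v - 1)
      have hstar : star (v - 1) = star v - 1 := by
        rw [show star (v - 1) = star v - star (1 : E →L[ℂ] E) from star_sub v 1, star_one]
      rw [hstar, hv]
      simp only [sub_mul, mul_sub, one_mul, mul_one, hmem.1, hmem.2]
      abel
    have hradius : spectralRadius ℂ (v - 1) = 0 := by
      have hsub : spectrum ℂ (v - 1) ⊆ {0} := by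
        intro w hw
        have : w ∈ spectrum ℂ v - ({1} : Set ℂ) := by
          rw [spectrum.sub_singleton_eq, map_one]
          exact hw
        obtain ⟨x, hx, y, hy, rfl⟩ := this
        have hx1 : x = 1 := hspecv hx
        have hy1 : y = 1 := hy
        simp [hx1, hy1]
      apply le_antisymm _ zero_le
      rw [spectralRadius]
      apply iSup₂_le
      intro k hk
      have : k = 0 := hsub hk
      simp [this]
    have hnn : ‖v - 1‖₊ = 0 := by
      have := IsStarNormal.spectralRadius_eq_nnnorm (v - 1)
      rw [hradius] at this
      exact_mod_cast this.symm
    have : v - 1 = 0 := by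
      rwa [nnnorm_eq_zero] at hnn
    have hveq : v = 1 := by rwa [sub_eq_zero] at this
    exact Subtype.ext hveq
end

section
/- Let P, Q be orthogonal projections on a Hilbert space with ‖P - Q‖ ≤ 4δ < 1, P of finite rank. Let PQ = V|PQ| be the polar decomposition. Then V*V = Q, VV* = P, and ‖P - V‖ ≤ 8δ. -/
open ContinuousLinearMap RCLike

local notation "⟪" x ", " y "⟫" => @inner ℂ _ _ x y

section Aux
variable {H : Type*} [NormedAddCommGroup H] [InnerProductSpace ℂ H] [CompleteSpace H]

private lemma aux_apply_le {R : H →L[ℂ] H} (h1 : IsIdempotentElem R)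
    (h2 : IsSelfAdjoint R) (x : H) : ‖R x‖ ≤ ‖x‖ := by
  rcases eq_or_ne (‖R x‖) 0 with hx | hx
  · rw [hx]; positivity
  · have hRR : R (R x) = R x := by
      conv_rhs => rw [← h1.eq]
      simp [mul_apply]
    have h3 : ⟪R x, R x⟫ = ⟪x, R x⟫ := by
      have := h2.isSymmetric x (R x)
      simpa [hRR] using this
    have h4 : (‖R x‖ : ℝ)^2 = re ⟪x, R x⟫ := by
      rw [← h3, inner_self_eq_norm_sq]
    have h5 : re ⟪x, R x⟫ ≤ ‖x‖ * ‖R x‖ := by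
      refine le_trans (re_le_norm _) ?_
      exact norm_inner_le_norm _ _
    have h6 : ‖R x‖ * ‖R x‖ ≤ ‖x‖ * ‖R x‖ := by nlinarith
    exact le_of_mul_le_mul_right (by linarith) (lt_of_le_of_ne (norm_nonneg _) (Ne.symm hx))

private lemma aux_norm_le_one {R : H →L[ℂ] H} (h1 : IsIdempotentElem R)
    (h2 : IsSelfAdjoint R) : ‖R‖ ≤ 1 :=
  opNorm_le_bound R zero_le_one fun x => by simpa using aux_apply_le h1 h2 x

private lemma aux_cs {S : H →L[ℂ] H} (hS : S.IsPositive) (x y : H) :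
    (re ⟪S x, y⟫)^2 ≤ re ⟪S x, x⟫ * re ⟪S y, y⟫ := by
  have hsym : re ⟪S y, x⟫ = re ⟪S x, y⟫ := by
    calc re ⟪S y, x⟫ = re ⟪y, S x⟫ := congrArg re (hS.isSelfAdjoint.isSymmetric y x)
      _ = re ⟪S x, y⟫ := inner_re_symm _ _
  have key : ∀ t : ℝ, 0 ≤ re ⟪S y, y⟫ * (t * t) + (2 * re ⟪S x, y⟫) * t + re ⟪S x, x⟫ := by
    intro t
    have h0 : 0 ≤ re ⟪S (x + (t:ℂ) • y), x + (t:ℂ) • y⟫ := hS.re_inner_nonneg_left _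
    have hexp : re ⟪S (x + (t:ℂ) • y), x + (t:ℂ) • y⟫
        = re ⟪S y, y⟫ * (t * t) + (2 * re ⟪S x, y⟫) * t + re ⟪S x, x⟫ := by
      rw [map_add, map_smul]
      simp only [inner_add_left, inner_add_right, inner_smul_left, inner_smul_right,
        Complex.conj_ofReal, mul_add, map_add, ← mul_assoc,
        ← Complex.ofReal_mul, ← Complex.real_smul, RCLike.smul_re]
      rw [hsym]
      ring
    rw [← hexp]; exact h0
  have hd := discrim_le_zero key
  rw [discrim] at hd
  nlinarith [hd]

end Aux

set_option maxHeartbeats 1000000 in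
/-- If `P, Q` are orthogonal projections with `P` of finite rank and
`‖P - Q‖ ≤ 4δ < 1`, and `PQ = V|PQ|` is the polar decomposition, then
`V*V = Q`, `VV* = P` and `‖P - V‖ ≤ 8δ`. -/
theorem stmt18 {H : Type*} [NormedAddCommGroup H] [InnerProductSpace ℂ H]
    [CompleteSpace H]
    (P Q : H →L[ℂ] H)
    (hPidem : IsIdempotentElem P) (hPsa : IsSelfAdjoint P)
    (hQidem : IsIdempotentElem Q) (hQsa : IsSelfAdjoint Q)
    (hPfin : FiniteDimensional ℂ (LinearMap.range (P : H →ₗ[ℂ] H)))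
    (δ : ℝ) (hδ : 4 * δ < 1) (hPQ : ‖P - Q‖ ≤ 4 * δ)
    (V S : H →L[ℂ] H) (hS : S.IsPositive)
    (hSsq : S * S = star (P * Q) * (P * Q))
    (hpolar : P * Q = V * S)
    (hker : ∀ x, S x = 0 → V x = 0) :
    star V * V = Q ∧ V * star V = P ∧ ‖P - V‖ ≤ 8 * δ := by
  have hSsa : IsSelfAdjoint S := hS.isSelfAdjoint
  have hδ0 : (0:ℝ) ≤ 4 * δ := le_trans (norm_nonneg _) hPQ
  -- S * S = Q * P * Q
  have hSS : S * S = Q * P * Q := by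
    rw [hSsq, star_mul, hPsa.star_eq, hQsa.star_eq, mul_assoc, ← mul_assoc P P Q, hPidem.eq,
      ← mul_assoc]
  -- ker Q ⊆ ker S
  have hkerQS : ∀ x, Q x = 0 → S x = 0 := by
    intro x hx
    have h2 : S (S x) = 0 := by
      have h1 : (S * S) x = 0 := by
        rw [hSS]
        simp [mul_apply, hx]
      simpa [mul_apply] using h1
    have h3 : ⟪S x, S x⟫ = (0:ℂ) := by
      calc ⟪S x, S x⟫ = ⟪x, S (S x)⟫ := hSsa.isSymmetric x (S x)
        _ = 0 := by rw [h2, inner_zero_right]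
    exact inner_self_eq_zero.mp h3
  -- pointwise: Q (Q x - x) = 0
  have hQfix : ∀ x : H, Q (Q x - x) = 0 := by
    intro x
    have : Q (Q x) = Q x := by
      conv_rhs => rw [← hQidem.eq]
      simp [mul_apply]
    rw [map_sub, this, sub_self]
  have hSQ : S * Q = S := by
    ext x
    simp only [ContinuousLinearMap.mul_apply]
    have h1 : S (Q x - x) = 0 := hkerQS _ (hQfix x)
    rw [map_sub] at h1
    exact sub_eq_zero.mp h1
  have hQS : Q * S = S := by
    have := congrArg star hSQ
    rwa [star_mul, hQsa.star_eq, hSsa.star_eq] at this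
  have hVQx : ∀ x : H, V (Q x) = V x := by
    intro x
    have h1 : V (Q x - x) = 0 := hker _ (hkerQS _ (hQfix x))
    rw [map_sub] at h1
    exact sub_eq_zero.mp h1
  have hVQ : V * Q = V := by
    ext x; simp only [ContinuousLinearMap.mul_apply]; exact hVQx x
  -- norm of Q - Q*P*Q
  have hQn : ‖Q‖ ≤ 1 := aux_norm_le_one hQidem hQsa
  have hPn : ‖P‖ ≤ 1 := aux_norm_le_one hPidem hPsa
  have hQPQe : Q * (Q - P) * Q = Q - Q * P * Q := by
    rw [mul_sub, hQidem.eq, sub_mul, hQidem.eq]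
  have hQPQn : ‖Q - Q * P * Q‖ ≤ 4 * δ := by
    rw [← hQPQe]
    have b1 : ‖Q * (Q - P) * Q‖ ≤ ‖Q * (Q - P)‖ * ‖Q‖ := norm_mul_le _ _
    have b2 : ‖Q * (Q - P)‖ ≤ ‖Q‖ * ‖Q - P‖ := norm_mul_le _ _
    have b4 : ‖Q - P‖ = ‖P - Q‖ := norm_sub_rev _ _
    nlinarith [norm_nonneg (Q - P), norm_nonneg Q, norm_nonneg (Q * (Q - P)), norm_nonneg P]
  -- the unit u with ↑u = 1 - (Q - Q*P*Q)
  set u : (H →L[ℂ] H)ˣ := Units.oneSub (Q - Q * P * Q) (lt_of_le_of_lt hQPQn hδ) with hu_def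
  have hu : (u : H →L[ℂ] H) = 1 - (Q - Q * P * Q) := rfl
  have hAQ : (u : H →L[ℂ] H) * Q = S * S := by
    rw [hu, hSS, sub_mul, one_mul, sub_mul, mul_assoc (Q * P) Q Q, hQidem.eq, sub_sub_cancel]
  have hQA : Q * (u : H →L[ℂ] H) = S * S := by
    rw [hu, hSS, mul_sub, mul_one, mul_sub, ← mul_assoc Q (Q * P) Q, ← mul_assoc Q Q P,
      hQidem.eq, sub_sub_cancel]
  have hQu : S * S * (↑u⁻¹ : H →L[ℂ] H) = Q := by
    rw [← hQA]; exact Units.mul_inv_cancel_right Q u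
  have hQu' : (↑u⁻¹ : H →L[ℂ] H) * (S * S) = Q := by
    rw [← hAQ]; exact Units.inv_mul_cancel_left u Q
  -- pointwise form: Q x = S (S (u⁻¹ x))
  have hQx : ∀ x : H, Q x = S (S ((↑u⁻¹ : H →L[ℂ] H) x)) := by
    intro x
    conv_lhs => rw [← hQu]
    simp [mul_apply]
  -- inner products of V∘S
  have hinnerVS : ∀ a b : H, ⟪V (S a), V (S b)⟫ = ⟪S a, S b⟫ := by
    intro a b
    have h1 : ∀ c : H, V (S c) = (P * Q) c := by
      intro c; rw [hpolar]; simp [mul_apply]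
    rw [h1 a, h1 b]
    have h2 : ⟪(P * Q) a, (P * Q) b⟫ = ⟪a, (ContinuousLinearMap.adjoint (P * Q)) ((P * Q) b)⟫ :=
      (adjoint_inner_right (P * Q) a ((P * Q) b)).symm
    have h3 : (ContinuousLinearMap.adjoint (P * Q)) ((P * Q) b) = (S * S) b := by
      rw [← star_eq_adjoint, ← ContinuousLinearMap.mul_apply, ← hSsq]
    rw [h2, h3]
    calc ⟪a, (S * S) b⟫ = ⟪a, S (S b)⟫ := by simp [mul_apply]
      _ = ⟪S a, S b⟫ := (hSsa.isSymmetric a (S b)).symm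
  -- star V * V = Q
  have hVVQ : star V * V = Q := by
    ext x
    refine ext_inner_right ℂ fun y => ?_
    have lhs1 : ⟪(star V * V) x, y⟫ = ⟪V x, V y⟫ := by
      rw [star_eq_adjoint, ContinuousLinearMap.mul_apply]
      exact adjoint_inner_left V y (V x)
    rw [lhs1, ← hVQx x, ← hVQx y, hQx x, hQx y, hinnerVS, ← hQx x, ← hQx y]
    calc ⟪Q x, Q y⟫ = ⟪x, Q (Q y)⟫ := hQsa.isSymmetric x (Q y)
      _ = ⟪x, Q y⟫ := by
          congr 1
          conv_rhs => rw [← hQidem.eq]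
          simp [mul_apply]
      _ = ⟪Q x, y⟫ := (hQsa.isSymmetric x y).symm
  refine ⟨hVVQ, ?_, ?_⟩
  -- the unit w with ↑w = 1 - (P - P*Q*P)
  · have hPQPe : P * (P - Q) * P = P - P * Q * P := by
      rw [mul_sub, hPidem.eq, sub_mul, hPidem.eq]
    have hPQPn : ‖P - P * Q * P‖ ≤ 4 * δ := by
      rw [← hPQPe]
      have b1 : ‖P * (P - Q) * P‖ ≤ ‖P * (P - Q)‖ * ‖P‖ := norm_mul_le _ _
      have b2 : ‖P * (P - Q)‖ ≤ ‖P‖ * ‖P - Q‖ := norm_mul_le _ _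
      nlinarith [norm_nonneg (P - Q), norm_nonneg P, norm_nonneg (P * (P - Q))]
    set w : (H →L[ℂ] H)ˣ := Units.oneSub (P - P * Q * P) (lt_of_le_of_lt hPQPn hδ) with hw_def
    have hw : (w : H →L[ℂ] H) = 1 - (P - P * Q * P) := rfl
    have hPB : P * (w : H →L[ℂ] H) = P * Q * P := by
      rw [hw, mul_sub, mul_one, mul_sub, ← mul_assoc P (P * Q) P, ← mul_assoc P P Q,
        hPidem.eq, sub_sub_cancel]
    have hPw : P * Q * P * (↑w⁻¹ : H →L[ℂ] H) = P := by
      rw [← hPB]; exact Units.mul_inv_cancel_right P w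
    -- pointwise: P x = V (S (P (w⁻¹ x)))
    have hPx : ∀ x : H, P x = V (S (P ((↑w⁻¹ : H →L[ℂ] H) x))) := by
      intro x
      conv_lhs => rw [← hPw]
      rw [hpolar]
      simp [mul_apply]
    -- P * V = V
    have hPV : P * V = V := by
      ext x
      simp only [ContinuousLinearMap.mul_apply]
      have h1 : V x = P (Q (S ((↑u⁻¹ : H →L[ℂ] H) x))) := by
        rw [← hVQx x, hQx x, ← ContinuousLinearMap.mul_apply V S, ← hpolar]
        simp [mul_apply]
      rw [h1, ← ContinuousLinearMap.mul_apply P P, hPidem.eq]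
    have hVP' : star V * P = star V := by
      have := congrArg star hPV
      rwa [star_mul, hPsa.star_eq] at this
    -- V * star V * P = P
    have hVVP : V * (star V * P) = P := by
      ext x
      simp only [ContinuousLinearMap.mul_apply]
      have h1 : star V (P x) = S (P ((↑w⁻¹ : H →L[ℂ] H) x)) := by
        rw [hPx x, ← ContinuousLinearMap.mul_apply (star V) V, hVVQ, ← ContinuousLinearMap.mul_apply Q S, hQS]
      rw [h1, ← hPx x]
    calc V * star V = V * (star V * P) := by rw [hVP']
      _ = P := hVVP
  -- the norm estimate
  · have hQSn : ‖Q - S‖ ≤ 4 * δ := by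
      -- construct the unit 1 + S
      have hSn : ‖S‖ ≤ 1 := by
        have h1 : ‖S‖ * ‖S‖ = ‖S * S‖ := by
          conv_rhs => rw [show (S * S : H →L[ℂ] H) = star S * S from by rw [hSsa.star_eq]]
          exact (CStarRing.norm_star_mul_self).symm
        have h2 : ‖S * S‖ ≤ 1 := by
          rw [hSS]
          have b1 : ‖Q * P * Q‖ ≤ ‖Q * P‖ * ‖Q‖ := norm_mul_le _ _
          have b2 : ‖Q * P‖ ≤ ‖Q‖ * ‖P‖ := norm_mul_le _ _
          nlinarith [norm_nonneg (Q * P), norm_nonneg Q, norm_nonneg P]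
        nlinarith [norm_nonneg S]
      -- ‖S x‖^2 ≤ re ⟪S x, x⟫
      have hS2 : ∀ x : H, ‖S x‖^2 ≤ re ⟪S x, x⟫ := by
        intro x
        rcases eq_or_ne (‖S x‖) 0 with hx | hx
        · rw [hx]
          simpa using hS.re_inner_nonneg_left x
        · have hcs := aux_cs hS x (S x)
          rw [inner_self_eq_norm_sq (𝕜 := ℂ)] at hcs
          have e2 : re ⟪S (S x), S x⟫ ≤ ‖S x‖^2 := by
            refine le_trans (le_trans (re_le_norm _) (norm_inner_le_norm _ _)) ?_
            have h6 : ‖S (S x)‖ ≤ ‖S x‖ := by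
              calc ‖S (S x)‖ ≤ ‖S‖ * ‖S x‖ := le_opNorm S (S x)
                _ ≤ 1 * ‖S x‖ := by nlinarith [norm_nonneg (S x)]
                _ = ‖S x‖ := one_mul _
            calc ‖S (S x)‖ * ‖S x‖ ≤ ‖S x‖ * ‖S x‖ := by nlinarith [norm_nonneg (S x)]
              _ = ‖S x‖^2 := (sq (‖S x‖)).symm
          have ha0 : 0 ≤ re ⟪S x, x⟫ := hS.re_inner_nonneg_left x
          have hc0 : (0:ℝ) < ‖S x‖ := lt_of_le_of_ne (norm_nonneg _) (Ne.symm hx)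
          set a := re ⟪S x, x⟫
          set b := re ⟪S (S x), S x⟫
          set c := ‖S x‖
          nlinarith [hcs, e2, ha0, hc0]
      -- ‖(1 - S) x‖ ≤ ‖x‖
      have hone_sub : ∀ x : H, ‖(1 - S : H →L[ℂ] H) x‖ ≤ ‖x‖ := by
        intro x
        have e0 : (1 - S : H →L[ℂ] H) x = x - S x := by simp [sub_apply]
        have e1 : ‖x - S x‖^2 = ‖x‖^2 - 2 * re ⟪S x, x⟫ + ‖S x‖^2 := by
          rw [← inner_self_eq_norm_sq (𝕜 := ℂ), ← inner_self_eq_norm_sq (𝕜 := ℂ) x,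
            ← inner_self_eq_norm_sq (𝕜 := ℂ) (S x)]
          simp only [inner_sub_left, inner_sub_right, map_sub]
          have : re ⟪x, S x⟫ = re ⟪S x, x⟫ := inner_re_symm _ _
          rw [this]; ring
        have e2 : ‖x - S x‖^2 ≤ ‖x‖^2 := by
          have := hS2 x
          rw [e1]
          nlinarith [hS.inner_nonneg_left x]
        rw [e0]
        nlinarith [norm_nonneg (x - S x), norm_nonneg x]
      have hhalf : ‖(2:ℂ)⁻¹ • (1 - S : H →L[ℂ] H)‖ < 1 := by
        rw [norm_smul]
        have h1 : ‖(1 - S : H →L[ℂ] H)‖ ≤ 1 :=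
          opNorm_le_bound _ zero_le_one fun x => by simpa using hone_sub x
        have h2 : ‖(2:ℂ)⁻¹‖ = 2⁻¹ := by norm_num
        rw [h2]
        nlinarith [norm_nonneg (1 - S : H →L[ℂ] H)]
      set v : (H →L[ℂ] H)ˣ := Units.oneSub ((2:ℂ)⁻¹ • (1 - S : H →L[ℂ] H)) hhalf with hv_def
      have hv : (v : H →L[ℂ] H) = 1 - (2:ℂ)⁻¹ • (1 - S) := rfl
      have hvval : (1 + S : H →L[ℂ] H) = (algebraMap ℂ (H →L[ℂ] H)) 2 * (v : H →L[ℂ] H) := by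
        rw [hv, Algebra.algebraMap_eq_smul_one, smul_one_mul]
        module
      have hunit : IsUnit (1 + S : H →L[ℂ] H) := by
        rw [hvval]
        exact ((isUnit_iff_ne_zero.mpr (two_ne_zero (α := ℂ))).map (algebraMap ℂ (H →L[ℂ] H))).mul v.isUnit
      obtain ⟨wu, hwu⟩ := hunit
      -- ‖wu⁻¹‖ ≤ 1
      have hwinv : ∀ y : H, ‖(↑wu⁻¹ : H →L[ℂ] H) y‖ ≤ ‖y‖ := by
        intro y
        set x := (↑wu⁻¹ : H →L[ℂ] H) y with hx_def
        have hyx : x + S x = y := by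
          have h1 : ((1 + S : H →L[ℂ] H) * (↑wu⁻¹ : H →L[ℂ] H)) y = y := by
            rw [← hwu, Units.mul_inv]
            simp
          have h2 : ((1 + S : H →L[ℂ] H) * (↑wu⁻¹ : H →L[ℂ] H)) y = x + S x := by
            simp [mul_apply, add_apply, one_apply, hx_def]
          rw [← h2, h1]
        rcases eq_or_ne (‖x‖) 0 with hx0 | hx0
        · rw [hx0]; positivity
        · have h3 : ‖x‖^2 ≤ re ⟪y, x⟫ := by
            rw [← hyx]
            have : ⟪x + S x, x⟫ = ⟪x, x⟫ + ⟪S x, x⟫ := inner_add_left _ _ _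
            rw [this, map_add, inner_self_eq_norm_sq]
            have := hS.re_inner_nonneg_left x
            linarith
          have h4 : re ⟪y, x⟫ ≤ ‖y‖ * ‖x‖ := le_trans (re_le_norm _) (norm_inner_le_norm _ _)
          have h5 : ‖x‖ * ‖x‖ ≤ ‖y‖ * ‖x‖ := by nlinarith
          exact le_of_mul_le_mul_right h5 (lt_of_le_of_ne (norm_nonneg _) (Ne.symm hx0))
      have hwinvn : ‖(↑wu⁻¹ : H →L[ℂ] H)‖ ≤ 1 :=
        opNorm_le_bound _ zero_le_one fun x => by simpa using hwinv x
      -- (Q - S) * (1 + S) = Q - S * S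
      have hfact : (Q - S) * (1 + S) = Q - S * S := by
        rw [mul_add, mul_one, sub_mul, hQS]
        abel
      have hQmS : Q - S = (Q - S * S) * (↑wu⁻¹ : H →L[ℂ] H) := by
        rw [← hfact, ← hwu, Units.mul_inv_cancel_right]
      calc ‖Q - S‖ = ‖(Q - S * S) * (↑wu⁻¹ : H →L[ℂ] H)‖ := by rw [← hQmS]
        _ ≤ ‖Q - S * S‖ * ‖(↑wu⁻¹ : H →L[ℂ] H)‖ := norm_mul_le _ _
        _ ≤ 4 * δ := by
            have h1 : ‖Q - S * S‖ ≤ 4 * δ := by rw [hSS]; exact hQPQn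
            nlinarith [norm_nonneg (Q - S * S), norm_nonneg (↑wu⁻¹ : H →L[ℂ] H)]
    -- assemble
    have hsplit : P - V = P * (P - Q) + V * (S - Q) := by
      rw [mul_sub, hPidem.eq, mul_sub, ← hpolar, hVQ]
      abel
    have hVn : ‖V‖ ≤ 1 := by
      refine opNorm_le_bound _ zero_le_one fun x => ?_
      have hQQ : Q (Q x) = Q x := by rw [← ContinuousLinearMap.mul_apply Q Q, hQidem.eq]
      have h1 : ⟪V x, V x⟫ = ⟪Q x, Q x⟫ := by
        calc ⟪V x, V x⟫ = ⟪x, (ContinuousLinearMap.adjoint V) (V x)⟫ :=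
              (adjoint_inner_right V x (V x)).symm
          _ = ⟪x, Q x⟫ := by rw [← star_eq_adjoint, ← ContinuousLinearMap.mul_apply, hVVQ]
          _ = ⟪x, Q (Q x)⟫ := by rw [hQQ]
          _ = ⟪Q x, Q x⟫ := (hQsa.isSymmetric x (Q x)).symm
      have h2 : ‖V x‖ = ‖Q x‖ := by
        have h3 := congrArg re h1
        rw [inner_self_eq_norm_sq, inner_self_eq_norm_sq] at h3
        nlinarith [norm_nonneg (V x), norm_nonneg (Q x)]
      rw [h2, one_mul]
      exact aux_apply_le hQidem hQsa x
    calc ‖P - V‖ = ‖P * (P - Q) + V * (S - Q)‖ := by rw [hsplit]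
      _ ≤ ‖P * (P - Q)‖ + ‖V * (S - Q)‖ := norm_add_le _ _
      _ ≤ ‖P‖ * ‖P - Q‖ + ‖V‖ * ‖S - Q‖ := add_le_add (norm_mul_le _ _) (norm_mul_le _ _)
      _ ≤ 8 * δ := by
          have h1 : ‖S - Q‖ = ‖Q - S‖ := norm_sub_rev _ _
          rw [h1]
          nlinarith [norm_nonneg P, norm_nonneg V, norm_nonneg (P - Q), norm_nonneg (Q - S)]
end

section
/- For any group Γ with at least two elements and any δ ∈ [0,2], one has F_Γ^{(1)}(δ) ≥ δ/2: there is a map μ : Γ → S¹ with μ(e) = 1, defect def(μ) ≤ δ, and D(μ) ≥ δ/2. -/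
private lemma norm_exp_sub_exp_aux (s t : ℝ) :
    ‖Complex.exp ((s : ℂ) * Complex.I) - Complex.exp ((t : ℂ) * Complex.I)‖
      = 2 * |Real.sin ((s - t) / 2)| := by
  have h1 : ((((s + t) / 2 : ℝ)) : ℂ) * Complex.I + (((s - t) / 2 : ℝ) : ℂ) * Complex.I
      = (s : ℂ) * Complex.I := by push_cast; ring
  have h2 : ((((s + t) / 2 : ℝ)) : ℂ) * Complex.I + ((-((s - t) / 2) : ℝ) : ℂ) * Complex.I
      = (t : ℂ) * Complex.I := by push_cast; ring
  have e1 : Complex.exp ((s : ℂ) * Complex.I) - Complex.exp ((t : ℂ) * Complex.I)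
      = Complex.exp ((((s + t) / 2 : ℝ)) * Complex.I) *
        (Complex.exp ((((s - t) / 2 : ℝ)) * Complex.I)
          - Complex.exp (((-((s - t) / 2) : ℝ)) * Complex.I)) := by
    rw [mul_sub, ← Complex.exp_add, ← Complex.exp_add, h1, h2]
  have e2 : Complex.exp ((((s - t) / 2 : ℝ)) * Complex.I)
      - Complex.exp (((-((s - t) / 2) : ℝ)) * Complex.I)
      = 2 * (Real.sin ((s - t) / 2) : ℂ) * Complex.I := by
    rw [Complex.exp_mul_I, Complex.exp_mul_I]
    push_cast
    rw [Complex.cos_neg, Complex.sin_neg]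
    ring
  rw [e1, e2]
  rw [norm_mul, Complex.norm_exp_ofReal_mul_I, one_mul, norm_mul, norm_mul, Complex.norm_I,
    mul_one, Complex.norm_real, Real.norm_eq_abs]
  norm_num

private lemma sin_lb_aux {a u : ℝ} (ha0 : 0 ≤ a) (h1 : a ≤ u) (h2 : u ≤ Real.pi - a) :
    Real.sin a ≤ Real.sin u := by
  have hπ := Real.pi_pos
  have ha2 : a ≤ Real.pi / 2 := by linarith
  rcases le_or_gt u (Real.pi / 2) with hu | hu
  · exact Real.strictMonoOn_sin.monotoneOn ⟨by linarith, by linarith⟩ ⟨by linarith, hu⟩ h1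
  · rw [← Real.sin_pi_sub u]
    exact Real.strictMonoOn_sin.monotoneOn ⟨by linarith, ha2⟩ ⟨by linarith, by linarith⟩
      (by linarith)

private lemma circle_exp_pow_aux (φ : ℝ) (k : ℕ) :
    Circle.exp ((k : ℝ) * φ) = (Circle.exp φ) ^ k := by
  induction k with
  | zero => simp
  | succ n ih =>
    push_cast
    rw [add_mul, one_mul, Circle.exp_add, ih, pow_succ]

/-- For any group `Γ` with at least two elements and `δ ∈ [0,2]`,
`F_Γ^{(1)}(δ) ≥ δ/2`: there is a map `μ : Γ → S¹` with `μ 1 = 1`, defect at most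
`δ`, and distance at least `δ/2` from every homomorphism `Γ → S¹`. -/
theorem stmt19 {Γ : Type*} [Group Γ] (hΓ : ∃ γ₀ : Γ, γ₀ ≠ 1)
    (δ : ℝ) (hδ0 : 0 ≤ δ) (hδ2 : δ ≤ 2) :
    ∃ μ : Γ → Circle, μ 1 = 1 ∧
      (∀ x y, ‖((μ (x * y) : ℂ)) - (μ x : ℂ) * (μ y : ℂ)‖ ≤ δ) ∧
      ∀ ν : Γ →* Circle, δ / 2 ≤ ⨆ γ : Γ, ‖(μ γ : ℂ) - (ν γ : ℂ)‖ := by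
  classical
  obtain ⟨γ₀, hγ₀⟩ := hΓ
  have hπ := Real.pi_pos
  set θ : ℝ := 2 * Real.arcsin (δ / 4) with hθdef
  have hδ41 : δ / 4 ≤ 1 := by linarith
  have hδ40 : -1 ≤ δ / 4 := by linarith
  have hθ2 : θ / 2 = Real.arcsin (δ / 4) := by rw [hθdef]; ring
  have hsin : Real.sin (θ / 2) = δ / 4 := by
    rw [hθ2]; exact Real.sin_arcsin hδ40 hδ41
  have hθ0 : 0 ≤ θ := by
    have : 0 ≤ Real.arcsin (δ / 4) := Real.arcsin_nonneg.mpr (by linarith)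
    linarith [hθ2]
  have hθπ : θ ≤ Real.pi / 3 := by
    by_contra h
    push_neg at h
    have h6 : Real.pi / 6 < θ / 2 := by linarith
    have hmem1 : Real.pi / 6 ∈ Set.Icc (-(Real.pi / 2)) (Real.pi / 2) :=
      ⟨by linarith, by linarith⟩
    have hmem2 : θ / 2 ∈ Set.Icc (-(Real.pi / 2)) (Real.pi / 2) := by
      rw [hθ2]; exact ⟨Real.neg_pi_div_two_le_arcsin _, Real.arcsin_le_pi_div_two _⟩
    have := Real.strictMonoOn_sin hmem1 hmem2 h6
    rw [Real.sin_pi_div_six, hsin] at this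
    linarith
  set z : Circle := Circle.exp θ with hz
  set μ : Γ → Circle := fun γ => if γ = γ₀ then z else 1 with hμ
  have hzc : (z : ℂ) = Complex.exp ((θ : ℂ) * Complex.I) := Circle.coe_exp θ
  -- norm of z - 1
  have hone : (1 : ℂ) = Complex.exp (((0 : ℝ) : ℂ) * Complex.I) := by simp
  have hz1 : ‖(z : ℂ) - 1‖ = δ / 2 := by
    rw [hzc, hone, norm_exp_sub_exp_aux θ 0]
    rw [sub_zero, abs_of_nonneg (by rw [hsin]; linarith)]
    rw [hsin]; ring
  have hz1' : ‖(1 : ℂ) - (z : ℂ)‖ = δ / 2 := by rw [norm_sub_rev]; exact hz1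
  have hznorm : ‖(z : ℂ)‖ = 1 := by
    rw [Circle.norm_coe]
  have h1γ : (1 : Γ) ≠ γ₀ := fun h => hγ₀ h.symm
  refine ⟨μ, by simp [hμ, h1γ], ?_, ?_⟩
  · -- defect bound
    intro x y
    have hzz : ‖(z : ℂ) * z - z‖ = δ / 2 := by
      rw [show (z : ℂ) * z - z = z * (z - 1) by ring, norm_mul, hznorm, one_mul, hz1]
    have hzz1 : ‖(1 : ℂ) - (z : ℂ) * z‖ ≤ δ := by
      calc ‖(1 : ℂ) - (z : ℂ) * z‖ = ‖((1 : ℂ) - z) + (z - z * z)‖ := by ring_nf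
        _ ≤ ‖(1 : ℂ) - (z : ℂ)‖ + ‖(z : ℂ) - z * z‖ := norm_add_le _ _
        _ = δ / 2 + δ / 2 := by rw [hz1', ← norm_neg ((z : ℂ) - z * z)]; rw [neg_sub]; rw [hzz]
        _ = δ := by ring
    have hμval : ∀ γ : Γ, (μ γ : ℂ) = 1 ∨ (μ γ : ℂ) = (z : ℂ) := by
      intro γ; by_cases h : γ = γ₀ <;> simp [hμ, h]
    rcases hμval (x * y) with ha | ha <;> rcases hμval x with hb | hb <;>
        rcases hμval y with hc | hc <;> rw [ha, hb, hc]
    · simp [hδ0]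
    · rw [one_mul, hz1']; linarith
    · rw [mul_one, hz1']; linarith
    · exact hzz1
    · rw [mul_one, hz1]; linarith
    · rw [one_mul, sub_self, norm_zero]; exact hδ0
    · rw [mul_one, sub_self, norm_zero]; exact hδ0
    · rw [norm_sub_rev, hzz]; linarith
  · -- distance to homomorphisms
    intro ν
    have hbdd : BddAbove (Set.range fun γ : Γ => ‖(μ γ : ℂ) - (ν γ : ℂ)‖) := by
      refine ⟨2, ?_⟩
      rintro _ ⟨γ, rfl⟩
      calc ‖(μ γ : ℂ) - (ν γ : ℂ)‖ ≤ ‖(μ γ : ℂ)‖ + ‖(ν γ : ℂ)‖ := norm_sub_le _ _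
        _ = 2 := by
            rw [Circle.norm_coe, Circle.norm_coe]
            norm_num
    rcases eq_or_lt_of_le hδ0 with hδe | hδpos
    · rw [← hδe]
      simpa using Real.iSup_nonneg (fun γ : Γ => norm_nonneg ((μ γ : ℂ) - (ν γ : ℂ)))
    have hθpos : 0 < θ := by
      have : 0 < Real.arcsin (δ / 4) := Real.arcsin_pos.mpr (by linarith)
      linarith [hθ2]
    set φ : ℝ := Complex.arg ((ν γ₀ : Circle) : ℂ) with hφdef
    have hφ1 : -Real.pi < φ := Complex.neg_pi_lt_arg _
    have hφ2 : φ ≤ Real.pi := Complex.arg_le_pi _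
    have hw : ((ν γ₀ : Circle) : ℂ) = Complex.exp ((φ : ℂ) * Complex.I) := by
      conv_lhs => rw [← Complex.norm_mul_exp_arg_mul_I ((ν γ₀ : Circle) : ℂ)]
      rw [Circle.norm_coe, Complex.ofReal_one, one_mul]
    have hμγ₀ : (μ γ₀ : ℂ) = Complex.exp ((θ : ℂ) * Complex.I) := by
      simp only [hμ, if_pos rfl]; exact hzc
    -- main claim : exists witness
    have hmain : ∃ γ : Γ, δ / 2 ≤ ‖(μ γ : ℂ) - (ν γ : ℂ)‖ := by
      rcases le_or_gt φ 0 with hφneg | hφpos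
      · refine ⟨γ₀, ?_⟩
        rw [hμγ₀, hw, norm_exp_sub_exp_aux θ φ]
        have hle : Real.sin (θ / 2) ≤ |Real.sin ((θ - φ) / 2)| := by
          refine le_trans (sin_lb_aux (by linarith) (by linarith) (by linarith)) (le_abs_self _)
        rw [hsin] at hle; linarith
      rcases le_or_gt (2 * θ) φ with hφbig | hφsmall
      · refine ⟨γ₀, ?_⟩
        rw [hμγ₀, hw, norm_exp_sub_exp_aux θ φ]
        have habs : |Real.sin ((θ - φ) / 2)| = |Real.sin ((φ - θ) / 2)| := by
          rw [show (θ - φ) / 2 = -((φ - θ) / 2) by ring, Real.sin_neg, abs_neg]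
        rw [habs]
        have hle : Real.sin (θ / 2) ≤ |Real.sin ((φ - θ) / 2)| := by
          refine le_trans (sin_lb_aux (by linarith) (by linarith) (by linarith)) (le_abs_self _)
        rw [hsin] at hle; linarith
      · -- 0 < φ < 2θ
        set k : ℕ := max 2 ⌈θ / φ⌉₊ with hk
        have hk2 : (2 : ℕ) ≤ k := le_max_left _ _
        have hk2' : (2 : ℝ) ≤ (k : ℝ) := by exact_mod_cast hk2
        have hdiv0 : 0 ≤ θ / φ := le_of_lt (div_pos hθpos hφpos)
        have hkθ : θ ≤ (k : ℝ) * φ := by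
          have h1 : θ / φ ≤ (⌈θ / φ⌉₊ : ℝ) := Nat.le_ceil _
          have h2 : ((⌈θ / φ⌉₊ : ℕ) : ℝ) ≤ (k : ℝ) := by
            exact_mod_cast Nat.cast_le.mpr (le_max_right 2 ⌈θ / φ⌉₊)
          have := (div_le_iff₀ hφpos).mp (le_trans h1 h2)
          linarith
        have hk4 : (k : ℝ) * φ < 4 * θ := by
          rcases max_choice 2 ⌈θ / φ⌉₊ with h | h
          · rw [hk, h]; push_cast; linarith
          · rw [hk, h]
            have hceil : (⌈θ / φ⌉₊ : ℝ) < θ / φ + 1 := Nat.ceil_lt_add_one hdiv0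
            have hdm : θ / φ * φ = θ := div_mul_cancel₀ θ (ne_of_gt hφpos)
            nlinarith
        -- γ₀ ^ k ≠ γ₀
        have hνγ₀ : ν γ₀ = Circle.exp φ := by
          apply Circle.coe_inj.mp
          rw [hw, Circle.coe_exp]
        have hkφ2 : 2 * φ ≤ (k : ℝ) * φ := mul_le_mul_of_nonneg_right hk2' hφpos.le
        have hne : γ₀ ^ k ≠ γ₀ := by
          intro h
          have h' := congrArg ν h
          rw [map_pow, hνγ₀, ← circle_exp_pow_aux] at h'
          obtain ⟨m, hm⟩ := Circle.exp_eq_exp.mp h'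
          have hmpos : 0 < (m : ℝ) * (2 * Real.pi) := by linarith
          have hmlt : (m : ℝ) * (2 * Real.pi) < 2 * Real.pi := by linarith
          have hm0 : 0 < m := by
            rcases le_or_gt 1 m with hm0 | hm0
            · exact hm0
            · exfalso
              have h0 : (m : ℝ) ≤ 0 := by exact_mod_cast Int.lt_add_one_iff.mp hm0
              have := mul_le_mul_of_nonneg_right h0 (by linarith : (0 : ℝ) ≤ 2 * Real.pi)
              rw [zero_mul] at this
              linarith
          have h1 : (1 : ℝ) ≤ (m : ℝ) := by exact_mod_cast hm0
          have := mul_le_mul_of_nonneg_right h1 (by linarith : (0 : ℝ) ≤ 2 * Real.pi)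
          rw [one_mul] at this
          linarith
        refine ⟨γ₀ ^ k, ?_⟩
        have hμk : (μ (γ₀ ^ k) : ℂ) = 1 := by simp [hμ, if_neg hne]
        have hνk : ((ν (γ₀ ^ k) : Circle) : ℂ)
            = Complex.exp ((((k : ℝ) * φ : ℝ) : ℂ) * Complex.I) := by
          rw [map_pow, hνγ₀, ← circle_exp_pow_aux, Circle.coe_exp]
        rw [hμk, hνk, hone, norm_exp_sub_exp_aux 0 ((k : ℝ) * φ)]
        have habs : |Real.sin ((0 - (k : ℝ) * φ) / 2)| = |Real.sin ((k : ℝ) * φ / 2)| := by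
          rw [show (0 - (k : ℝ) * φ) / 2 = -((k : ℝ) * φ / 2) by ring, Real.sin_neg, abs_neg]
        rw [habs]
        have hle : Real.sin (θ / 2) ≤ |Real.sin ((k : ℝ) * φ / 2)| := by
          refine le_trans (sin_lb_aux (by linarith) (by linarith) (by linarith)) (le_abs_self _)
        rw [hsin] at hle; linarith
    obtain ⟨γ, hγ⟩ := hmain
    exact le_ciSup_of_le hbdd γ hγ
end
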